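/- arXiv:2505.16718 — 11 statements merged into one kernel-verified Lean document; each statement's English description precedes it below -/
import Mathlib

section
/- Let g_r be the unique power series with g_r = 1 + X*g_r^r. Then for every n, the coefficient of X^n in g_r equals (1/(r*n+1)) * choose(r*n+1, n). -/
open PowerSeries Finset

-- truncated Vandermonde
lemma vand_trunc (a m n K : ℕ) (hK : a < K) :
    ∑ i ∈ Finset.range K, (if i ≤ n then a.choose i * m.choose (n - i) else 0) =
      (a + m).choose n := by
  rw [Nat.add_choose_eq, Finset.Nat.sum_antidiagonal_eq_sum_range_succ_mk]
  have h1 : ∑ i ∈ Finset.range K, (if i ≤ n then a.choose i * m.choose (n - i) else 0) =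
      ∑ i ∈ Finset.range (K + n + 1), (if i ≤ n then a.choose i * m.choose (n - i) else 0) := by
    apply Finset.sum_subset (Finset.range_subset_range.2 (by omega))
    intro i _ hi
    simp only [Finset.mem_range, not_lt] at hi
    have : a.choose i = 0 := Nat.choose_eq_zero_of_lt (by omega)
    simp [this]
  have h2 : ∑ i ∈ Finset.range (n + 1), a.choose i * m.choose (n - i) =
      ∑ i ∈ Finset.range (K + n + 1), (if i ≤ n then a.choose i * m.choose (n - i) else 0) := by
    calc ∑ i ∈ Finset.range (n + 1), a.choose i * m.choose (n - i)
        = ∑ i ∈ Finset.range (n + 1), (if i ≤ n then a.choose i * m.choose (n - i) else 0) := by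
          refine Finset.sum_congr rfl fun i hi => ?_
          simp only [Finset.mem_range] at hi
          rw [if_pos (by omega)]
      _ = ∑ i ∈ Finset.range (K + n + 1), (if i ≤ n then a.choose i * m.choose (n - i) else 0) := by
          apply Finset.sum_subset (Finset.range_subset_range.2 (by omega))
          intro i _ hi
          simp only [Finset.mem_range, not_lt] at hi
          rw [if_neg (by omega)]
  rw [h1, h2]

lemma absorb_vand (k m N : ℕ) (hN : 1 ≤ N) :
    ∑ j ∈ Finset.range (k + 1), (if j ≤ N then j * k.choose j * m.choose (N - j) else 0) =
      k * ((k - 1) + m).choose (N - 1) := by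
  cases k with
  | zero => simp
  | succ a =>
    rw [Finset.sum_range_succ']
    have h0 : (if 0 ≤ N then 0 * (a+1).choose 0 * m.choose (N - 0) else 0) = 0 := by simp
    rw [h0, add_zero]
    have hterm : ∀ i, (if i + 1 ≤ N then (i + 1) * (a + 1).choose (i + 1) * m.choose (N - (i + 1)) else 0)
        = (a + 1) * (if i ≤ N - 1 then a.choose i * m.choose ((N - 1) - i) else 0) := by
      intro i
      by_cases h : i + 1 ≤ N
      · rw [if_pos h, if_pos (by omega)]
        have key : (i + 1) * (a + 1).choose (i + 1) = (a + 1) * a.choose i := by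
          rw [mul_comm (i+1), ← Nat.add_one_mul_choose_eq]
        have hsub : N - (i + 1) = (N - 1) - i := by omega
        rw [hsub, key, mul_assoc]
      · rw [if_neg h, if_neg (by omega), mul_zero]
    simp only [hterm]
    rw [← Finset.mul_sum, vand_trunc a m (N - 1) (a + 1) (by omega)]
    simp

lemma key (r : ℕ) (hr : 1 ≤ r) (g : PowerSeries ℚ) (hg : g = 1 + X * g ^ r) :
    ∀ n k : ℕ, 1 ≤ k →
      coeff n (g ^ k) = (k : ℚ) / ((r * n + k : ℕ) : ℚ) * (((r * n + k).choose n : ℕ) : ℚ) := by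
  intro n
  induction n using Nat.strong_induction_on with
  | _ N IH =>
    intro k hk
    rcases Nat.eq_zero_or_pos N with hN | hN
    · subst hN
      have hc0 : constantCoeff g = 1 := by
        rw [hg]; simp
      have : (coeff 0) (g ^ k) = 1 := by
        rw [coeff_zero_eq_constantCoeff, map_pow, hc0, one_pow]
      rw [this]
      have hk0 : ((k : ℚ)) ≠ 0 := by positivity
      simp [hk0]
    · -- N ≥ 1
      nth_rewrite 1 [hg]
      rw [show (1 : ℚ⟦X⟧) + X * g ^ r = X * g ^ r + 1 from add_comm _ _, add_pow, map_sum]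
      have hterm : ∀ j ∈ Finset.range (k + 1),
          coeff N ((X * g ^ r) ^ j * 1 ^ (k - j) * (k.choose j : ℚ⟦X⟧)) =
          (r : ℚ) / ((r * N : ℕ) : ℚ) *
            (((if j ≤ N then j * k.choose j * (r * N).choose (N - j) else 0 : ℕ) : ℚ)) := by
        intro j hj
        rw [one_pow, mul_one, mul_pow, ← pow_mul]
        rw [show ((k.choose j : ℕ) : ℚ⟦X⟧) = C ((k.choose j : ℕ) : ℚ) from
          (by simp [map_natCast])]
        rw [coeff_mul_C, coeff_X_pow_mul']
        by_cases h : j ≤ N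
        · rw [if_pos h, if_pos h]
          rcases Nat.eq_zero_or_pos j with hj0 | hj0
          · subst hj0; simp [coeff_one, hN.ne']
          · have hlt : N - j < N := by omega
            have hrj : 1 ≤ r * j := Nat.one_le_iff_ne_zero.2 (by positivity)
            rw [IH (N - j) hlt (r * j) hrj]
            have hdenom : r * (N - j) + r * j = r * N := by
              rw [← Nat.mul_add, Nat.sub_add_cancel h]
            rw [hdenom]
            have hrN : ((r * N : ℕ) : ℚ) ≠ 0 := by
              have : 0 < r * N := Nat.mul_pos hr hN
              exact_mod_cast this.ne'
            push_cast
            field_simp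
        · rw [if_neg h, if_neg h, zero_mul, Nat.cast_zero, mul_zero]
      rw [Finset.sum_congr rfl hterm, ← Finset.mul_sum, ← Nat.cast_sum,
        absorb_vand k (r * N) N hN]
      -- now pure arithmetic
      obtain ⟨a, rfl⟩ : ∃ a, k = a + 1 := ⟨k - 1, by omega⟩
      have hnat : (a + r * N + 1) * ((a + r * N).choose (N - 1)) =
          (a + r * N + 1).choose N * N := by
        have := Nat.add_one_mul_choose_eq (a + r * N) (N - 1)
        rwa [Nat.sub_add_cancel hN] at this
      have hrN : ((r * N : ℕ) : ℚ) ≠ 0 := by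
        have : 0 < r * N := Nat.mul_pos hr hN
        exact_mod_cast this.ne'
      have hden : ((r * N + (a + 1) : ℕ) : ℚ) ≠ 0 := by
        have : 0 < r * N + (a + 1) := by omega
        exact_mod_cast this.ne'
      have hnatQ : ((a + r * N + 1 : ℕ) : ℚ) * (((a + r * N).choose (N - 1) : ℕ) : ℚ) =
          (((a + r * N + 1).choose N : ℕ) : ℚ) * ((N : ℕ) : ℚ) := by exact_mod_cast congrArg (Nat.cast : ℕ → ℚ) hnat
      have hN0 : ((N : ℕ) : ℚ) ≠ 0 := by exact_mod_cast hN.ne'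
      have hr0 : ((r : ℕ) : ℚ) ≠ 0 := by
        have hr' : 0 < r := hr
        exact_mod_cast hr'.ne'
      simp only [Nat.add_sub_cancel]
      rw [show r * N + (a + 1) = a + r * N + 1 by omega]
      push_cast at hnatQ ⊢
      have hden' : (a : ℚ) + r * N + 1 ≠ 0 := by positivity
      field_simp
      linear_combination hnatQ

theorem stmt_2 (r : ℕ) (hr : 1 ≤ r) (g : PowerSeries ℚ)
    (hg : g = 1 + X * g ^ r) (n : ℕ) :
    coeff n g = (1 / (r * n + 1 : ℚ)) * Nat.choose (r * n + 1) n := by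
  have h := key r hr g hg n 1 le_rfl
  rw [pow_one] at h
  rw [h]
  push_cast
  ring
end

section
/- Let g_r and g_{r-1} be power series satisfying g_r = 1 + X*g_r^r and g_{r-1} = 1 + X*g_{r-1}^{r-1} (r ≥ 1). Then the compositional inverse of the series X*g_r(X) is X / g_{r-1}(X); that is, substituting X/g_{r-1}(X) into X*g_r(X) yields X. -/
open PowerSeries

/-- Composition (substitution) of formal power series: `comp f g = f(g)`,
well-defined when `g` has zero constant coefficient. -/
noncomputable def comp (f g : PowerSeries ℚ) : PowerSeries ℚ :=
  PowerSeries.mk fun n =>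
    coeff n (∑ k ∈ Finset.range (n + 1), (coeff k f) • g ^ k)

lemma coeff_pow_of_lt {h : PowerSeries ℚ} (hh : constantCoeff h = 0)
    {n k : ℕ} (hk : n < k) : coeff n (h ^ k) = 0 := by
  have hX : (X : PowerSeries ℚ) ∣ h := X_dvd_iff.mpr hh
  have : (X : PowerSeries ℚ) ^ k ∣ h ^ k := pow_dvd_pow_of_dvd hX k
  exact X_pow_dvd_iff.mp this n hk

lemma coeff_comp_eq (f h : PowerSeries ℚ) (hh : constantCoeff h = 0)
    {n N : ℕ} (hn : n < N) :
    coeff n (comp f h) = coeff n (Polynomial.eval₂ C h (trunc N f)) := by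
  rw [comp, coeff_mk, eval₂_trunc_eq_sum_range]
  calc coeff n (∑ k ∈ Finset.range (n + 1), coeff k f • h ^ k)
      = ∑ k ∈ Finset.range (n + 1), coeff k f * coeff n (h ^ k) := by
        rw [map_sum]; exact Finset.sum_congr rfl fun k _ => by
          rw [smul_eq_C_mul, coeff_C_mul]
    _ = ∑ k ∈ Finset.range N, coeff k f * coeff n (h ^ k) := by
        refine Finset.sum_subset (Finset.range_subset_range.mpr hn) fun k _ hk => ?_
        rw [Finset.mem_range, not_lt] at hk
        rw [coeff_pow_of_lt hh hk, mul_zero]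
    _ = coeff n (∑ i ∈ Finset.range N, C (coeff i f) * h ^ i) := by
        rw [map_sum]; exact Finset.sum_congr rfl fun k _ => by rw [coeff_C_mul]

lemma comp_coe (p : Polynomial ℚ) (h : PowerSeries ℚ) (hh : constantCoeff h = 0) :
    comp (p : PowerSeries ℚ) h = Polynomial.eval₂ C h p := by
  ext n
  rw [coeff_comp_eq _ h hh (Nat.lt_succ_of_le (le_max_left n p.natDegree)),
    trunc_coe_eq_self (Nat.lt_succ_of_le (le_max_right n p.natDegree))]

lemma trunc_comp_eq (f h : PowerSeries ℚ) (hh : constantCoeff h = 0) (n : ℕ) :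
    trunc (n + 1) (comp f h)
      = trunc (n + 1) (Polynomial.eval₂ C h (trunc (n + 1) f)) := by
  ext m
  rw [Polynomial.coeff_inj.mpr rfl]  -- noop
  rw [coeff_trunc, coeff_trunc]
  split_ifs with hm
  · exact coeff_comp_eq f h hh hm
  · rfl

lemma comp_mul (f₁ f₂ h : PowerSeries ℚ) (hh : constantCoeff h = 0) :
    comp (f₁ * f₂) h = comp f₁ h * comp f₂ h := by
  ext n
  set P₁ := trunc (n + 1) f₁
  set P₂ := trunc (n + 1) f₂
  have key : coeff n (comp (f₁ * f₂) h)
      = coeff n (Polynomial.eval₂ C h P₁ * Polynomial.eval₂ C h P₂) := by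
    have h1 : coeff n (comp (f₁ * f₂) h)
        = coeff n (comp ((P₁ * P₂ : Polynomial ℚ) : PowerSeries ℚ) h) := by
      rw [coeff_comp_eq _ h hh (Nat.lt_succ_self n),
        coeff_comp_eq _ h hh (Nat.lt_succ_self n)]
      congr 2
      rw [Polynomial.coe_mul, trunc_trunc_mul_trunc]
    rw [h1, comp_coe _ _ hh, Polynomial.eval₂_mul]
  rw [key, coeff_mul_eq_coeff_trunc_mul_trunc _ _ (Nat.lt_succ_self n),
    coeff_mul_eq_coeff_trunc_mul_trunc (comp f₁ h) (comp f₂ h) (Nat.lt_succ_self n)]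
  have t1 : trunc (n + 1) (comp f₁ h) = trunc (n + 1) (Polynomial.eval₂ C h P₁) := by
    ext m; rw [coeff_trunc, coeff_trunc]; split_ifs with hm
    · exact coeff_comp_eq f₁ h hh hm
    · rfl
  have t2 : trunc (n + 1) (comp f₂ h) = trunc (n + 1) (Polynomial.eval₂ C h P₂) := by
    ext m; rw [coeff_trunc, coeff_trunc]; split_ifs with hm
    · exact coeff_comp_eq f₂ h hh hm
    · rfl
  rw [t1, t2]

lemma comp_one (h : PowerSeries ℚ) : comp 1 h = 1 := by
  ext n
  rw [comp, coeff_mk]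
  have : ∑ k ∈ Finset.range (n + 1), (coeff k (1 : PowerSeries ℚ)) • h ^ k = 1 := by
    rw [Finset.sum_eq_single 0]
    · simp
    · intro k _ hk
      rw [coeff_one, if_neg hk, zero_smul]
    · intro hn; exact absurd (Finset.mem_range.mpr (Nat.succ_pos n)) hn
  rw [this]

lemma comp_add (f₁ f₂ h : PowerSeries ℚ) :
    comp (f₁ + f₂) h = comp f₁ h + comp f₂ h := by
  ext n
  simp [comp, add_smul, Finset.sum_add_distrib]

lemma comp_pow (f h : PowerSeries ℚ) (hh : constantCoeff h = 0) (k : ℕ) :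
    comp (f ^ k) h = comp f h ^ k := by
  induction k with
  | zero => simpa using comp_one h
  | succ k ih => rw [pow_succ, pow_succ, comp_mul _ _ _ hh, ih]

lemma comp_X (h : PowerSeries ℚ) (hh : constantCoeff h = 0) :
    comp X h = h := by
  ext n
  rw [comp, coeff_mk]
  cases n with
  | zero =>
    have hx : coeff 0 (X : PowerSeries ℚ) = 0 := by
      rw [coeff_zero_eq_constantCoeff_apply, constantCoeff_X]
    rw [Finset.sum_range_one, pow_zero, hx, zero_smul, map_zero,
      coeff_zero_eq_constantCoeff_apply, hh]
  | succ m =>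
    rw [Finset.sum_eq_single 1]
    · simp
    · intro k _ hk
      rw [coeff_X, if_neg hk, zero_smul]
    · intro h1
      exact absurd (Finset.mem_range.mpr (by omega)) h1

theorem stmt_3 (r : ℕ) (hr : 1 ≤ r) (g gprev : PowerSeries ℚ)
    (hg : g = 1 + X * g ^ r) (hgprev : gprev = 1 + X * gprev ^ (r - 1)) :
    comp (X * g) (X * gprev⁻¹) = X := by
  set h : PowerSeries ℚ := X * gprev⁻¹ with hh_def
  have hc1 : constantCoeff gprev = 1 := by
    have := congrArg (constantCoeff) hgprev
    simpa using this
  have hinv : gprev⁻¹ * gprev = 1 :=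
    PowerSeries.inv_mul_cancel gprev (by rw [hc1]; exact one_ne_zero)
  have hh : constantCoeff h = 0 := by simp [hh_def]
  set W := comp g h with hW_def
  have hW : W = 1 + h * W ^ r := by
    conv_lhs => rw [hW_def, hg]
    rw [comp_add, comp_one, comp_mul _ _ _ hh, comp_X _ hh, comp_pow _ _ hh]
  have hgp : gprev = 1 + h * gprev ^ r := by
    have : h * gprev ^ r = X * gprev ^ (r - 1) := by
      have hr' : gprev ^ r = gprev * gprev ^ (r - 1) := by
        conv_lhs => rw [show r = (r - 1) + 1 by omega]
        ring
      rw [hh_def, hr']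
      calc X * gprev⁻¹ * (gprev * gprev ^ (r - 1))
          = X * (gprev⁻¹ * gprev) * gprev ^ (r - 1) := by ring
        _ = X * gprev ^ (r - 1) := by rw [hinv, mul_one]
    rw [this, ← hgprev]
  have hWg : W = gprev := by
    set S : PowerSeries ℚ := ∑ i ∈ Finset.range r, W ^ i * gprev ^ (r - 1 - i) with hS
    have hdiff : W - gprev = h * (S * (W - gprev)) := by
      conv_lhs => rw [hW, hgp]
      rw [hS, geom_sum₂_mul]
      ring
    have hfac : (W - gprev) * (1 - h * S) = 0 := by
      have := hdiff
      ring_nf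
      ring_nf at this
      linear_combination this
    rcases mul_eq_zero.mp hfac with h0 | h0
    · exact sub_eq_zero.mp h0
    · exfalso
      have := congrArg (constantCoeff) h0
      simp [hh] at this
    
  have : comp (X * g) h = h * W := by
    rw [comp_mul _ _ _ hh, comp_X _ hh]
  rw [this, hWg, hh_def]
  calc X * gprev⁻¹ * gprev = X * (gprev⁻¹ * gprev) := by ring
    _ = X := by rw [hinv, mul_one]
end

section
/- Let g_r satisfy g_r = 1 + X*g_r^r (r ≥ 1). Then substituting X/(1+X)^r for X in g_r yields 1 + X; that is, g_r(X/(1+X)^r) = 1 + X. -/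
open PowerSeries

private lemma hFunit (r : ℕ) :
    (X : PowerSeries ℚ) * ((1 + X) ^ r)⁻¹ * (1 + X) ^ r = X := by
  rw [mul_assoc, PowerSeries.inv_mul_cancel, mul_one]
  simp

private lemma key_s5 (r : ℕ) (g : PowerSeries ℚ) (hg : g = 1 + X * g ^ r)
    (n : ℕ) : ∀ j : ℕ,
    (X : PowerSeries ℚ) ^ (n + 1) ∣
      (∑ k ∈ Finset.range (n + 1),
        (coeff k (g ^ j)) • (X * ((1 + X) ^ r)⁻¹) ^ k) - (1 + X) ^ j := by
  have g0 : constantCoeff g = 1 := by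
    rw [hg]; simp
  set h : PowerSeries ℚ := X * ((1 + X) ^ r)⁻¹ with hh
  induction n with
  | zero =>
    intro j
    rw [PowerSeries.X_pow_dvd_iff]
    intro m hm
    interval_cases m
    simp [map_pow, g0]
  | succ n ih =>
    intro j
    induction j with
    | zero =>
      have : (∑ k ∈ Finset.range (n + 1 + 1),
          (coeff k ((g : PowerSeries ℚ) ^ 0)) • h ^ k) = 1 := by
        rw [Finset.sum_eq_single 0]
        · simp
        · intro k _ hk
          simp [PowerSeries.coeff_one, hk]
        · simp
      rw [this]; simp
    | succ j ihj =>
      have hpow : g ^ (j + 1) = g ^ j + X * g ^ (r + j) := by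
        have e : g ^ j * (1 + X * g ^ r) = g ^ j + X * g ^ (r + j) := by
          rw [pow_add]; ring
        rw [pow_succ]
        nth_rewrite 2 [hg]
        exact e
      have hsplit : (∑ k ∈ Finset.range (n + 1 + 1),
          (coeff k (g ^ (j + 1))) • h ^ k)
          = (∑ k ∈ Finset.range (n + 1 + 1), (coeff k (g ^ j)) • h ^ k)
            + h * ∑ k ∈ Finset.range (n + 1),
                (coeff k (g ^ (r + j))) • h ^ k := by
        have : ∀ k, (coeff k (g ^ (j + 1))) • h ^ k
            = (coeff k (g ^ j)) • h ^ k + (coeff k (X * g ^ (r + j))) • h ^ k := by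
          intro k
          rw [hpow]
          simp [add_smul]
        simp_rw [this, Finset.sum_add_distrib]
        congr 1
        rw [Finset.sum_range_succ' (fun k => (coeff k (X * g ^ (r + j))) • h ^ k) (n + 1)]
        simp only [coeff_zero_X_mul, zero_smul, add_zero, coeff_succ_X_mul]
        rw [Finset.mul_sum]
        congr 1
        ext k
        rw [pow_succ']
        rw [smul_eq_C_mul, smul_eq_C_mul]
        ring
      rw [hsplit]
      have hF : (1 : PowerSeries ℚ) + X = 1 + h * (1 + X) ^ r := by
        rw [hh, hFunit]
      have step : (∑ k ∈ Finset.range (n + 1 + 1), (coeff k (g ^ j)) • h ^ k)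
            + h * (∑ k ∈ Finset.range (n + 1), (coeff k (g ^ (r + j))) • h ^ k)
            - (1 + X) ^ (j + 1)
          = ((∑ k ∈ Finset.range (n + 1 + 1), (coeff k (g ^ j)) • h ^ k) - (1 + X) ^ j)
            + h * ((∑ k ∈ Finset.range (n + 1), (coeff k (g ^ (r + j))) • h ^ k)
                - (1 + X) ^ (r + j))
            + ((1 + X) ^ j + h * (1 + X) ^ (r + j) - (1 + X) ^ (j + 1)) := by
        ring
      rw [step]
      have hz : (1 + X : PowerSeries ℚ) ^ j + h * (1 + X) ^ (r + j) - (1 + X) ^ (j + 1) = 0 := by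
        have : (1 + X : PowerSeries ℚ) ^ (j + 1) = (1 + h * (1 + X) ^ r) * (1 + X) ^ j := by
          rw [← hF, pow_succ]; ring
        rw [this, pow_add]
        ring
      rw [hz, add_zero]
      refine dvd_add (ihj) ?_
      obtain ⟨c, hc⟩ := ih (r + j)
      rw [hc, hh]
      refine ⟨((1 + X) ^ r)⁻¹ * c, ?_⟩
      ring

theorem stmt_5 (r : ℕ) (hr : 1 ≤ r) (g : PowerSeries ℚ)
    (hg : g = 1 + X * g ^ r) :
    comp g (X * ((1 + X) ^ r)⁻¹) = 1 + X := by
  ext n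
  rw [comp, coeff_mk]
  have := key_s5 r g hg n 1
  rw [pow_one, PowerSeries.X_pow_dvd_iff] at this
  have h2 := this n (Nat.lt_succ_self n)
  rw [map_sub, sub_eq_zero] at h2
  simpa [pow_one] using h2
end

section
/- For r ≥ 1 and all n, k : ℕ with k ≤ n, the coefficient of X^n in g_r(X) * (X*g_r(X)^r)^k equals ((r*k+1)/((r-1)*n+k+1)) * choose(r*n, n-k), where g_r = 1 + X*g_r^r. -/
open PowerSeries

lemma fuss_aux (r : ℕ) (hr : 1 ≤ r) (g : PowerSeries ℚ)
    (hg : g = 1 + X * g ^ r) :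
    ∀ m s : ℕ, 1 ≤ s ∨ 1 ≤ m →
      coeff m (g ^ s) = (s : ℚ) / (r * m + s) * Nat.choose (r * m + s) m := by
  have hc0 : constantCoeff g = 1 := by
    have h := congrArg (constantCoeff) hg
    simpa using h
  have hcoeff0 : ∀ s : ℕ, coeff 0 (g ^ s) = 1 := by
    intro s
    rw [coeff_zero_eq_constantCoeff, map_pow, hc0, one_pow]
  have hrec : ∀ s : ℕ, g ^ (s + 1) = g ^ s + X * g ^ (s + r) := by
    intro s
    rw [pow_succ]
    nth_rewrite 2 [hg]
    rw [mul_add, mul_one, pow_add]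
    ring
  intro m
  induction m with
  | zero =>
    intro s hs
    have hs' : 1 ≤ s := by omega
    have hsne : (s : ℚ) ≠ 0 := Nat.cast_ne_zero.mpr (by omega)
    rw [hcoeff0]
    simp [div_self hsne]
  | succ m ih =>
    have key : ∀ s : ℕ, coeff (m + 1) (g ^ s) =
        (s : ℚ) / (r * (m + 1) + s) * Nat.choose (r * (m + 1) + s) (m + 1) := by
      intro s
      induction s with
      | zero => simp [coeff_one]
      | succ s ihs =>
        have h2 := ih (s + r) (Or.inl (by omega))
        have hco : coeff (m + 1) (g ^ (s + 1)) =
            coeff (m + 1) (g ^ s) + coeff m (g ^ (s + r)) := by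
          rw [hrec s, map_add, coeff_succ_X_mul]
        have e1 : r * m + (s + r) = r * (m + 1) + s := by ring
        have e2 : r * (m + 1) + (s + 1) = r * (m + 1) + s + 1 := by ring
        rw [hco, ihs, h2, e1, e2]
        have ed : (r : ℚ) * (m : ℚ) + ((s + r : ℕ) : ℚ) = (r : ℚ) * ((m : ℚ) + 1) + (s : ℚ) := by
          push_cast; ring
        rw [ed]
        -- pure algebra from here
        have hMa : m + 1 ≤ r * (m + 1) + s :=
          le_trans (Nat.le_mul_of_pos_left (m + 1) (by omega)) (Nat.le_add_right _ _)
        have hMa' : m + 1 ≤ r * (m + 1) + s + 1 := le_trans hMa (Nat.le_succ _)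
        have h1q : ((r * (m + 1) + s).choose (m + 1) : ℚ) * (((r * (m + 1) + s : ℕ) : ℚ) + 1)
            = ((r * (m + 1) + s + 1).choose (m + 1) : ℚ)
              * ((((r * (m + 1) + s : ℕ) : ℚ) + 1) - ((m : ℚ) + 1)) := by
          have hMam : m ≤ r * (m + 1) + s := le_trans (Nat.le_succ m) hMa
          have hq := congrArg (Nat.cast : ℕ → ℚ) (Nat.choose_mul_succ_eq (r * (m + 1) + s) (m + 1))
          push_cast [Nat.cast_sub hMam] at hq
          push_cast
          linarith [hq]
        have h2q : ((((r * (m + 1) + s : ℕ) : ℚ)) + 1) * ((r * (m + 1) + s).choose m : ℚ)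
            = ((r * (m + 1) + s + 1).choose (m + 1) : ℚ) * ((m : ℚ) + 1) := by
          have hq := congrArg (Nat.cast : ℕ → ℚ) (Nat.add_one_mul_choose_eq (r * (m + 1) + s) m)
          push_cast at hq
          push_cast
          linarith [hq]
        have hrq : (1 : ℚ) ≤ r := by exact_mod_cast hr
        have hm0 : (0:ℚ) ≤ (m:ℚ) := Nat.cast_nonneg m
        have hs0 : (0:ℚ) ≤ (s:ℚ) := Nat.cast_nonneg s
        have hden : (0 : ℚ) < (r : ℚ) * ((m : ℚ) + 1) + (s : ℚ) := by nlinarith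
        have hden1 : (0 : ℚ) < (r : ℚ) * ((m : ℚ) + 1) + (s : ℚ) + 1 := by linarith
        have hca : ((r * (m + 1) + s : ℕ) : ℚ) = (r : ℚ) * ((m : ℚ) + 1) + (s : ℚ) := by
          push_cast; ring
        rw [hca] at h1q h2q
        push_cast
        field_simp
        linear_combination ((s : ℚ)) * h1q + ((s : ℚ) + (r : ℚ)) * h2q
    intro s _
    rw [key s]
    push_cast
    ring

theorem stmt_7 (r : ℕ) (hr : 1 ≤ r) (g : PowerSeries ℚ)
    (hg : g = 1 + X * g ^ r) (n k : ℕ) (hk : k ≤ n) :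
    coeff n (g * (X * g ^ r) ^ k) =
      ((r * k + 1 : ℚ) / ((r - 1) * n + k + 1)) * Nat.choose (r * n) (n - k) := by
  have hre : g * (X * g ^ r) ^ k = X ^ k * g ^ (r * k + 1) := by
    rw [mul_pow, ← pow_mul, pow_succ]
    ring
  have hcoeffn : coeff n (X ^ k * g ^ (r * k + 1)) = coeff (n - k) (g ^ (r * k + 1)) := by
    conv_lhs => rw [show n = (n - k) + k from (Nat.sub_add_cancel hk).symm]
    exact coeff_X_pow_mul _ _ _
  rw [hre, hcoeffn, fuss_aux r hr g hg (n - k) (r * k + 1) (Or.inl (by omega))]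
  have ea : r * (n - k) + (r * k + 1) = r * n + 1 := by
    rw [← Nat.add_assoc, ← Nat.mul_add, Nat.sub_add_cancel hk]
  rw [ea]
  have ecast : (r : ℚ) * ((n - k : ℕ) : ℚ) + ((r * k + 1 : ℕ) : ℚ)
      = ((r * n : ℕ) : ℚ) + 1 := by
    rw [Nat.cast_sub hk]; push_cast; ring
  rw [ecast]
  have hnrn : n ≤ r * n := Nat.le_mul_of_pos_left n (by omega)
  have hle : n - k ≤ r * n + 1 := le_trans (le_trans (Nat.sub_le n k) hnrn) (Nat.le_succ _)
  have hCq := congrArg (Nat.cast : ℕ → ℚ) (Nat.choose_mul_succ_eq (r * n) (n - k))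
  push_cast [Nat.cast_sub hle, Nat.cast_sub hk] at hCq
  have hrq : (1 : ℚ) ≤ r := by exact_mod_cast hr
  have hn0 : (0:ℚ) ≤ (n:ℚ) := Nat.cast_nonneg n
  have hk0 : (0:ℚ) ≤ (k:ℚ) := Nat.cast_nonneg k
  have hnn : (n:ℚ) ≤ (r:ℚ) * n := by nlinarith
  have hd1 : (0:ℚ) < (r:ℚ) * n + 1 := by positivity
  have hd2 : (0:ℚ) < ((r:ℚ) - 1) * n + k + 1 := by nlinarith
  push_cast
  field_simp [hd1.ne', hd2.ne']
  rw [eq_div_iff (by nlinarith)]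
  linear_combination -hCq
end

section
/- For r ≥ 1 and n, k : ℕ, the coefficient of X^n in g_r(X)^{k+1} equals ((k+1)/(r*n+k+1)) * choose(r*n+k+1, n), where g_r = 1 + X*g_r^r. -/
open PowerSeries

lemma fc_rec (r : ℕ) (g : PowerSeries ℚ) (hg : g = 1 + X * g ^ r) (n m : ℕ) :
    coeff (n + 1) (g ^ (m + 1)) =
      coeff (n + 1) (g ^ m) + coeff n (g ^ (m + r)) := by
  have h : g ^ (m + 1) = g ^ m * (1 + X * g ^ r) := by rw [← hg, pow_succ]
  have h2 : g ^ (m + 1) = g ^ m + X * g ^ (m + r) := by rw [h, pow_add]; ring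
  rw [h2, map_add, coeff_succ_X_mul]

lemma fc_key (r : ℕ) (hr : 1 ≤ r) (g : PowerSeries ℚ)
    (hg : g = 1 + X * g ^ r) :
    ∀ n m : ℕ, coeff n (g ^ (m + 1)) * (r * n + m + 1) =
      (m + 1) * Nat.choose (r * n + m + 1) n := by
  have hc : constantCoeff g = 1 := by
    have := congrArg (constantCoeff) hg
    simpa using this
  intro n
  induction n with
  | zero =>
    intro m
    have : coeff 0 (g ^ (m + 1)) = 1 := by
      rw [coeff_zero_eq_constantCoeff, map_pow, hc, one_pow]
    simp [this]
  | succ n ihn =>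
    intro m
    induction m with
    | zero =>
      have hrec := fc_rec r g hg n 0
      rw [pow_zero] at hrec
      have hc1 : coeff (n + 1) (1 : PowerSeries ℚ) = 0 := by simp
      rw [hrec, hc1, zero_add, Nat.zero_add]
      rw [show r * (n + 1) + 0 + 1 = r * n + r + 1 from by ring]
      have h1 := ihn (r - 1)
      rw [Nat.sub_add_cancel hr] at h1
      rw [show r * n + (r - 1) + 1 = r * n + r from by omega] at h1
      push_cast [Nat.cast_sub hr] at h1
      have h2 : ((r * n + r + 1 : ℕ) : ℚ) * (Nat.choose (r * n + r) n : ℚ)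
          = (Nat.choose (r * n + r + 1) (n + 1) : ℚ) * ((n : ℚ) + 1) := by
        exact_mod_cast congrArg (Nat.cast : ℕ → ℚ) (Nat.add_one_mul_choose_eq (r * n + r) n)
      have hr0 : (r : ℚ) ≠ 0 := by positivity
      have hn0 : ((n : ℚ) + 1) ≠ 0 := by positivity
      have h1' : coeff n (g ^ r) * ((n : ℚ) + 1) = Nat.choose (r * n + r) n := by
        have : (r : ℚ) * (coeff n (g ^ r) * ((n : ℚ) + 1))
            = (r : ℚ) * (Nat.choose (r * n + r) n : ℚ) := by
          linear_combination h1
        exact mul_left_cancel₀ hr0 this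
      apply mul_right_cancel₀ hn0
      push_cast at h2 ⊢
      linear_combination ((r : ℚ) * n + r + 1) * h1' + h2
    | succ m ihm =>
      have hrec := fc_rec r g hg n (m + 1)
      rw [hrec]
      have h1 := ihm
      have h2 := ihn (m + r)
      rw [show m + r + 1 = m + 1 + r from by ring,
        show r * n + (m + r) + 1 = r * (n + 1) + m + 1 from by ring] at h2
      have hnN : n ≤ r * (n + 1) + m + 1 := by nlinarith
      have h4 : ((Nat.choose (r * (n + 1) + m + 1 + 1) (n + 1) : ℕ) : ℚ)
          = (Nat.choose (r * (n + 1) + m + 1) (n + 1) : ℚ)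
            + (Nat.choose (r * (n + 1) + m + 1) n : ℚ) := by
        rw [Nat.choose_succ_succ]
        push_cast
        ring
      have h3 : (Nat.choose (r * (n + 1) + m + 1) (n + 1) : ℚ) * ((n : ℚ) + 1)
          = (Nat.choose (r * (n + 1) + m + 1) n : ℚ)
            * ((r : ℚ) * ((n : ℚ) + 1) + (m : ℚ) + 1 - (n : ℚ)) := by
        have hcast := congrArg (Nat.cast : ℕ → ℚ)
          (Nat.choose_succ_right_eq (r * (n + 1) + m + 1) n)
        push_cast [Nat.cast_sub hnN] at hcast
        linear_combination hcast
      have hN0 : ((r * (n + 1) + m + 1 : ℕ) : ℚ) ≠ 0 :=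
        Nat.cast_ne_zero.mpr (by omega)
      have hn0 : ((n : ℚ) + 1) ≠ 0 := by positivity
      rw [show r * (n + 1) + (m + 1) + 1 = r * (n + 1) + m + 1 + 1 from by ring]
      apply mul_right_cancel₀ (mul_ne_zero hN0 hn0)
      push_cast at h1 h2 h4 ⊢
      linear_combination
        ((((n : ℚ) + 1) * ((r : ℚ) * ((n : ℚ) + 1) + m + 2)) * h1)
        + ((((n : ℚ) + 1) * ((r : ℚ) * ((n : ℚ) + 1) + m + 2)) * h2)
        - (((r : ℚ) * ((n : ℚ) + 1)) * h3)
        - ((((m : ℚ) + 2) * ((r : ℚ) * ((n : ℚ) + 1) + m + 1) * ((n : ℚ) + 1)) * h4)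

theorem stmt_8 (r : ℕ) (hr : 1 ≤ r) (g : PowerSeries ℚ)
    (hg : g = 1 + X * g ^ r) (n k : ℕ) :
    coeff n (g ^ (k + 1)) =
      ((k + 1 : ℚ) / (r * n + k + 1)) * Nat.choose (r * n + k + 1) n := by
  have key := fc_key r hr g hg n k
  have hd : ((r : ℚ) * n + k + 1) ≠ 0 := by positivity
  field_simp
  push_cast at key ⊢
  linear_combination key
end

section
/- For r ≥ 1 and n, k : ℕ with k ≤ n, the coefficient of X^n in g_r(X) * (X*g_r(X))^k equals ((k+1)/(r*(n-k)+k+1)) * choose(r*(n-k)+k+1, n-k), where g_r = 1 + X*g_r^r. -/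
open PowerSeries

private lemma gpow_rec (r : ℕ) (g : PowerSeries ℚ) (hg : g = 1 + X * g ^ r) (s : ℕ) :
    g ^ (s + 1) = g ^ s + X * g ^ (s + r) := by
  calc g ^ (s+1) = g ^ s * (1 + X * g ^ r) := by rw [← hg, pow_succ]
  _ = g ^ s + X * g ^ (s + r) := by rw [pow_add]; ring

private lemma fuss (r : ℕ) (hr : 1 ≤ r) (g : PowerSeries ℚ) (hg : g = 1 + X * g ^ r) :
    ∀ m s : ℕ, 1 ≤ s → coeff m (g ^ s)
      = (s : ℚ) / ((r * m + s : ℕ) : ℚ) * ((r * m + s).choose m : ℚ) := by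
  have hc : constantCoeff g = 1 := by rw [hg]; simp
  intro m
  induction m with
  | zero =>
    intro s hs
    have hs0 : (s:ℚ) ≠ 0 := Nat.cast_ne_zero.2 (by omega)
    simp [coeff_zero_eq_constantCoeff, map_pow, hc, div_self hs0]
  | succ m ih =>
    intro s hs
    induction s, hs using Nat.le_induction with
    | base =>
      have e1 : coeff (m+1) (g ^ 1) = coeff m (g ^ r) := by
        rw [show (1:ℕ) = 0 + 1 from rfl, gpow_rec r g hg 0]
        simp [coeff_succ_X_mul]
      rw [e1, ih r hr]
      have harg : r * (m+1) + 1 = (r * m + r) + 1 := by ring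
      rw [harg]
      set P := r * m + r with hP
      have hq : ((P:ℚ)+1) * (P.choose m : ℚ) = ((P+1).choose (m+1) : ℚ) * ((m:ℚ)+1) := by
        exact_mod_cast congrArg (Nat.cast : ℕ → ℚ) (Nat.add_one_mul_choose_eq P m)
      have hPpos : (0:ℚ) < (P:ℚ) := by
        have : 0 < P := by omega
        exact_mod_cast this
      have hrq : (P:ℚ) = r * ((m:ℚ)+1) := by
        have : P = r * (m+1) := by omega
        rw [this]; push_cast; ring
      push_cast
      rw [div_mul_eq_mul_div, div_mul_eq_mul_div, div_eq_div_iff hPpos.ne' (by positivity)]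
      linear_combination (r:ℚ) * hq - (((P+1).choose (m+1) : ℚ)) * hrq
    | succ s hs ihs =>
      have e1 : coeff (m+1) (g ^ (s+1)) = coeff (m+1) (g ^ s) + coeff m (g ^ (s+r)) := by
        rw [gpow_rec r g hg s]
        simp [coeff_succ_X_mul]
      rw [e1, ihs, ih (s+r) (by omega)]
      have harg1 : r * (m+1) + (s+1) = (r*m + (s+r)) + 1 := by ring
      have harg2 : r * (m+1) + s = r*m + (s+r) := by ring
      rw [harg1, harg2]
      set N := r*m + (s+r) with hN
      have hmN : m ≤ N := le_trans (Nat.le_mul_of_pos_left m (by omega)) (Nat.le_add_right _ _)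
      have hPa : ((N+1).choose (m+1) : ℚ) = (N.choose m : ℚ) + (N.choose (m+1) : ℚ) := by
        exact_mod_cast congrArg (Nat.cast : ℕ → ℚ) (Nat.choose_succ_succ N m)
      have hR : (N.choose (m+1) : ℚ) * ((m:ℚ)+1) = (N.choose m : ℚ) * ((N:ℚ) - m) := by
        have := Nat.choose_succ_right_eq N m
        have h2 : ((N.choose (m+1) * (m+1) : ℕ) : ℚ) = ((N.choose m * (N - m) : ℕ) : ℚ) := by
          exact_mod_cast congrArg (Nat.cast : ℕ → ℚ) this
        push_cast [Nat.cast_sub hmN] at h2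
        linarith [h2]
      have hNpos : (0:ℚ) < (N:ℚ) := by
        have : 0 < N := by omega
        exact_mod_cast this
      have hNq : (N:ℚ) = r*((m:ℚ)+1) + s := by
        have : N = r*(m+1) + s := by omega
        rw [this]; push_cast; ring
      push_cast
      have hN1 : ((N:ℚ)+1) ≠ 0 := by positivity
      rw [div_mul_eq_mul_div, div_mul_eq_mul_div, div_mul_eq_mul_div, ← add_div,
        div_eq_div_iff hNpos.ne' hN1]
      linear_combination (-((s:ℚ)+1) * (N:ℚ)) * hPa - (r:ℚ) * hR - ((N.choose (m+1) : ℚ) + (N.choose m : ℚ)) * hNq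

theorem stmt_9 (r : ℕ) (hr : 1 ≤ r) (g : PowerSeries ℚ)
    (hg : g = 1 + X * g ^ r) (n k : ℕ) (hk : k ≤ n) :
    coeff n (g * (X * g) ^ k) =
      ((k + 1 : ℚ) / (r * (n - k) + k + 1)) * Nat.choose (r * (n - k) + k + 1) (n - k) := by
  have e0 : g * (X * g) ^ k = X ^ k * g ^ (k+1) := by
    rw [mul_pow]; ring
  have e1 : coeff n (g * (X * g) ^ k) = coeff (n - k) (g ^ (k+1)) := by
    rw [e0]
    have h := coeff_X_pow_mul (g ^ (k+1)) k (n - k)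
    rwa [Nat.sub_add_cancel hk] at h
  rw [e1, fuss r hr g hg (n - k) (k+1) (by omega)]
  push_cast [Nat.cast_sub hk]
  ring_nf
end

section
/- For r ≥ 1 and all n, k : ℕ, the Fuss-Catalan entry ((k+1)/(r*n+k+1)) * choose(r*n+k+1, n) equals the sum over j from 0 to n of ((r*j+1)/((r-1)*n+j+1)) * choose(r*n, n-j) * choose(k, j). -/
private def G (s n t : ℕ) : ℚ :=
  (t + 1) / (s * n + t + 1) * Nat.choose ((s + 1) * n + t) n

private lemma G_zero (s t : ℕ) : G s 0 t = 1 := by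
  have h : ((t : ℚ) + 1) ≠ 0 := by positivity
  simp [G, div_self h]

private lemma G_delta (s n t : ℕ) :
    G s (n + 1) (t + 1) = G s (n + 1) t + G s n (t + (s + 1)) := by
  unfold G
  have h1 : (s + 1) * n + (t + (s + 1)) = (s + 1) * (n + 1) + t := by ring
  have h2 : (s + 1) * (n + 1) + (t + 1) = ((s + 1) * (n + 1) + t) + 1 := by ring
  rw [h1, h2]
  set M := (s + 1) * (n + 1) + t with hM
  have pasQ : (Nat.choose (M + 1) (n + 1) : ℚ) =
      Nat.choose M n + Nat.choose M (n + 1) := by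
    exact_mod_cast Nat.choose_succ_succ M n
  have key : Nat.choose M (n + 1) * (n + 1) = Nat.choose M n * (s * (n + 1) + t + 1) := by
    have hMn : M - n = s * (n + 1) + t + 1 := by
      have : M = n + (s * (n + 1) + t + 1) := by rw [hM]; ring
      omega
    rw [Nat.choose_succ_right_eq M n, hMn]
  have keyQ : (Nat.choose M (n + 1) : ℚ) * (n + 1) =
      Nat.choose M n * (s * (n + 1) + t + 1) := by exact_mod_cast key
  have hn1 : ((n : ℚ) + 1) ≠ 0 := by positivity
  have hchoose : (Nat.choose M (n + 1) : ℚ) =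
      Nat.choose M n * ((s : ℚ) * (n + 1) + t + 1) / (n + 1) := by
    field_simp
    linear_combination keyQ
  rw [pasQ, hchoose]
  have d1 : ((s : ℚ) * (n + 1) + t + 1) ≠ 0 := by positivity
  have d2 : ((s : ℚ) * (n + 1) + (t + 1) + 1) ≠ 0 := by positivity
  have d3 : ((s : ℚ) * n + t + (s + 1) + 1) ≠ 0 := by positivity
  push_cast
  field_simp
  ring


private lemma G_sum (s : ℕ) :
    ∀ k a n, G s n (a + k) =
      ∑ j ∈ Finset.range (n + 1), G s (n - j) (a + (s + 1) * j) * Nat.choose k j := by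
  intro k
  induction k with
  | zero =>
    intro a n
    rw [Finset.sum_eq_single 0]
    · simp
    · intro j _ hj
      obtain ⟨i, rfl⟩ := Nat.exists_eq_succ_of_ne_zero hj
      simp
    · intro h; simp at h
  | succ k ih =>
    intro a n
    cases n with
    | zero => simp [G_zero]
    | succ m =>
      have pasc : ∀ j : ℕ, (Nat.choose (k + 1) (j + 1) : ℚ)
          = Nat.choose k j + Nat.choose k (j + 1) := fun j => by
        exact_mod_cast Nat.choose_succ_succ k j
      have e2 := Finset.sum_range_succ'
        (fun j => G s (m + 1 - j) (a + (s + 1) * j) * (Nat.choose k j : ℚ)) (m + 1)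
      simp only [Nat.succ_sub_succ, Nat.choose_zero_right, Nat.cast_one, mul_one,
        Nat.mul_zero, Nat.add_zero, mul_zero, add_zero] at e2
      calc G s (m + 1) (a + (k + 1))
          = G s (m + 1) ((a + k) + 1) := by rw [add_assoc]
        _ = G s (m + 1) (a + k) + G s m ((a + (s + 1)) + k) := by
            rw [G_delta, show (a + k) + (s + 1) = (a + (s + 1)) + k from by omega]
        _ = (∑ j ∈ Finset.range (m + 2), G s (m + 1 - j) (a + (s + 1) * j) * Nat.choose k j)
            + ∑ j ∈ Finset.range (m + 1),
                G s (m - j) ((a + (s + 1)) + (s + 1) * j) * Nat.choose k j := by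
            rw [← ih, ← ih]
        _ = (∑ j ∈ Finset.range (m + 1),
                G s (m - j) (a + (s + 1) * (j + 1)) * Nat.choose k (j + 1)
              + G s (m + 1) a)
            + ∑ j ∈ Finset.range (m + 1),
                G s (m - j) (a + (s + 1) * (j + 1)) * Nat.choose k j := by
            rw [e2]
            have harg : ∑ j ∈ Finset.range (m + 1),
                G s (m - j) ((a + (s + 1)) + (s + 1) * j) * (Nat.choose k j : ℚ)
                = ∑ j ∈ Finset.range (m + 1),
                G s (m - j) (a + (s + 1) * (j + 1)) * (Nat.choose k j : ℚ) :=
              Finset.sum_congr rfl fun j _ => by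
                rw [show (a + (s + 1)) + (s + 1) * j = a + (s + 1) * (j + 1) from by ring]
            rw [harg]; norm_num
        _ = ∑ j ∈ Finset.range (m + 1),
              G s (m - j) (a + (s + 1) * (j + 1)) * Nat.choose (k + 1) (j + 1)
            + G s (m + 1) a := by
            simp only [pasc, mul_add]
            rw [Finset.sum_add_distrib]
            ring
        _ = ∑ j ∈ Finset.range (m + 2), G s (m + 1 - j) (a + (s + 1) * j)
              * Nat.choose (k + 1) j := by
            rw [Finset.sum_range_succ'
              (fun j => G s (m + 1 - j) (a + (s + 1) * j) * (Nat.choose (k + 1) j : ℚ)) (m + 1)]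
            simp [Nat.succ_sub_succ]

theorem stmt_11 (r : ℕ) (hr : 1 ≤ r) (n k : ℕ) :
    ((k + 1 : ℚ) / (r * n + k + 1)) * Nat.choose (r * n + k + 1) n =
      ∑ j ∈ Finset.range (n + 1),
        ((r * j + 1 : ℚ) / ((r - 1) * n + j + 1)) *
          Nat.choose (r * n) (n - j) * Nat.choose k j := by
  obtain ⟨s, rfl⟩ : ∃ s, r = s + 1 := ⟨r - 1, by omega⟩
  have hL : ((k + 1 : ℚ) / ((s + 1) * n + k + 1)) * Nat.choose ((s + 1) * n + k + 1) n
      = G s n k := by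
    unfold G
    have hnat := Nat.choose_mul_succ_eq ((s + 1) * n + k) n
    have hsub : (s + 1) * n + k + 1 - n = s * n + k + 1 := by
      have : (s + 1) * n = n + s * n := by ring
      omega
    rw [hsub] at hnat
    have hQ : (Nat.choose ((s + 1) * n + k) n : ℚ) * (((s : ℚ) + 1) * n + k + 1)
        = (Nat.choose ((s + 1) * n + k + 1) n : ℚ) * ((s : ℚ) * n + k + 1) := by
      exact_mod_cast hnat
    have d1 : ((s : ℚ) + 1) * n + k + 1 ≠ 0 := by positivity
    have d2 : ((s : ℚ)) * n + k + 1 ≠ 0 := by positivity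
    rw [div_mul_eq_mul_div, div_mul_eq_mul_div, div_eq_div_iff d1 d2]
    linear_combination (-((k : ℚ) + 1)) * hQ
  have hS := G_sum s k 0 n
  simp only [Nat.zero_add] at hS
  push_cast
  rw [hL, hS]
  refine Finset.sum_congr rfl fun j hj => ?_
  have hjn : j ≤ n := by
    have := Finset.mem_range.mp hj; omega
  unfold G
  have harg : (s + 1) * (n - j) + (s + 1) * j = (s + 1) * n := by
    rw [← Nat.mul_add, Nat.sub_add_cancel hjn]
  rw [harg]
  have hcast : ((n - j : ℕ) : ℚ) = (n : ℚ) - j := Nat.cast_sub hjn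
  have h1 : ((((s + 1) * j : ℕ) : ℚ) + 1) = ((s : ℚ) + 1) * j + 1 := by push_cast; ring
  have h2 : ((s : ℚ) * ((n - j : ℕ) : ℚ) + (((s + 1) * j : ℕ) : ℚ) + 1)
      = ((s : ℚ) + 1 - 1) * n + j + 1 := by
    rw [hcast]; push_cast; ring
  rw [h1, h2]
end

section
/- For r ≥ 1 and n ≥ 1, the Fuss-Catalan numbers satisfy the lattice-path column recurrence: FC(n,k;r) = FC(n,k-1;r) + FC(n-1,k+r-1;r) for k ≥ 1, and FC(n,0;r) = FC(n-1,r-1;r), where FC(n,k;r) = ((k+1)/(rn+k+1)) * choose(rn+k+1, n). -/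
noncomputable def FC (r n k : ℕ) : ℚ :=
  ((k + 1 : ℚ) / (r * n + k + 1)) * Nat.choose (r * n + k + 1) n

lemma FC_zero (r m : ℕ) : FC r 0 m = 1 := by
  have h : ((m:ℚ) + 1) ≠ 0 := by positivity
  simp [FC]
  field_simp
  exact h

lemma FC_eq (r m k : ℕ) (hr : 1 ≤ r) :
    FC r (m+1) k = (Nat.choose (r*(m+1)+k) (m+1) : ℚ)
      - ((r:ℚ) - 1) * Nat.choose (r*(m+1)+k) m := by
  set M := r*(m+1)+k with hMdef
  have hmM : m ≤ M := by have : m + 1 ≤ r * (m+1) := Nat.le_mul_of_pos_left _ hr; omega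
  have hq1 : ((M:ℚ)+1) * Nat.choose M m = Nat.choose (M+1) (m+1) * (m+1) := by
    exact_mod_cast congrArg (Nat.cast : ℕ → ℚ) (Nat.add_one_mul_choose_eq M m)
  have hq2 : (Nat.choose M (m+1) : ℚ) * (m+1) = Nat.choose M m * ((M:ℚ) - m) := by
    have := congrArg (Nat.cast : ℕ → ℚ) (Nat.choose_succ_right_eq M m)
    push_cast [Nat.cast_sub hmM] at this
    exact_mod_cast this
  have hM : ((M:ℚ)+1) ≠ 0 := by positivity
  have hm1 : ((m:ℚ)+1) ≠ 0 := by positivity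
  have hMq : (M:ℚ) = r*(m+1)+k := by rw [hMdef]; push_cast; ring
  unfold FC
  rw [show (r*(m+1)+k+1 : ℕ) = M + 1 from rfl]
  rw [show ((r:ℚ) * ((m+1:ℕ):ℚ) + k + 1) = (M:ℚ) + 1 by rw [hMdef]; push_cast; ring]
  rw [div_mul_eq_mul_div, div_eq_iff hM]
  apply mul_right_cancel₀ hm1
  linear_combination (-(k:ℚ)-1) * hq1 - ((M:ℚ)+1) * hq2 - (Nat.choose M m : ℚ) * ((M:ℚ)+1) * hMq

lemma FC_one (r k : ℕ) (hr : 1 ≤ r) : FC r 1 k = (k:ℚ) + 1 := by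
  have h := FC_eq r 0 k hr
  simp only [Nat.choose_one_right, Nat.choose_zero_right, Nat.cast_one, mul_one] at h
  rw [show (1:ℕ) = 0 + 1 from rfl, h]
  simp [Nat.choose_one_right]

theorem stmt_12 (r : ℕ) (hr : 1 ≤ r) (n : ℕ) (hn : 1 ≤ n) :
    (∀ k : ℕ, 1 ≤ k → FC r n k = FC r n (k - 1) + FC r (n - 1) (k + r - 1)) ∧
      FC r n 0 = FC r (n - 1) (r - 1) := by
  obtain ⟨m, rfl⟩ : ∃ m, n = m + 1 := ⟨n - 1, by omega⟩
  simp only [Nat.add_sub_cancel]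
  constructor
  · intro k hk
    obtain ⟨j, rfl⟩ : ∃ j, k = j + 1 := ⟨k - 1, by omega⟩
    simp only [Nat.add_sub_cancel]
    rw [show j + 1 + r - 1 = j + r by omega]
    match m with
    | 0 =>
      rw [FC_one r (j+1) hr, FC_one r j hr, FC_zero]
      push_cast; ring
    | p + 1 =>
      rw [FC_eq r (p+1) (j+1) hr, FC_eq r (p+1) j hr, FC_eq r p (j+r) hr]
      rw [show r*(p+1)+(j+r) = r*(p+1+1)+j from by ring]
      rw [show r*(p+1+1)+(j+1) = (r*(p+1+1)+j) + 1 from by ring]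
      set P := r*(p+1+1)+j with hP
      have h1 : Nat.choose (P+1) (p+1+1) = Nat.choose P (p+1) + Nat.choose P (p+1+1) :=
        Nat.choose_succ_succ P (p+1)
      have h2 : Nat.choose (P+1) (p+1) = Nat.choose P p + Nat.choose P (p+1) :=
        Nat.choose_succ_succ P p
      rw [h1, h2]
      push_cast
      ring
  · match m with
    | 0 =>
      rw [FC_zero]
      have h := FC_one r 0 hr
      simpa using h
    | p + 1 =>
      rw [FC_eq r (p+1) 0 hr, FC_eq r p (r-1) hr]
      have hQ1 : r*(p+1+1) + 0 = (r*(p+1)+(r-1)) + 1 := by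
        have h : r*(p+1+1) = r*(p+1) + r := by ring
        omega
      rw [hQ1]
      have hpQ : p + 1 ≤ r*(p+1)+(r-1) := by nlinarith
      have h1 : Nat.choose ((r*(p+1)+(r-1))+1) (p+1+1)
          = Nat.choose (r*(p+1)+(r-1)) (p+1) + Nat.choose (r*(p+1)+(r-1)) (p+1+1) :=
        Nat.choose_succ_succ _ (p+1)
      have h2 : Nat.choose ((r*(p+1)+(r-1))+1) (p+1)
          = Nat.choose (r*(p+1)+(r-1)) p + Nat.choose (r*(p+1)+(r-1)) (p+1) :=
        Nat.choose_succ_succ _ p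
      have hkey : (Nat.choose (r*(p+1)+(r-1)) (p+1+1) : ℚ)
          = ((r:ℚ) - 1) * Nat.choose (r*(p+1)+(r-1)) (p+1) := by
        have hc := congrArg (Nat.cast : ℕ → ℚ) (Nat.choose_succ_right_eq (r*(p+1)+(r-1)) (p+1))
        push_cast [Nat.cast_sub hpQ, Nat.cast_sub hr] at hc
        have hQc : ((r*(p+1)+(r-1) : ℕ) : ℚ) = (r:ℚ)*(p+1) + ((r:ℚ)-1) := by
          push_cast [Nat.cast_sub hr]; ring
        have hp2 : ((p:ℚ)+1+1) ≠ 0 := by positivity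
        apply mul_right_cancel₀ hp2
        rw [hc]; ring
      rw [h1, h2]
      push_cast [hkey]
      ring
end

section
/- Let c be the power series with c = 1 + X*c^2 (the Catalan generating function). Then for all n, k with k ≤ n, the coefficient of X^n in c(X) * (X*c(X)^2)^k equals ((2k+1)/(n+k+1)) * choose(2n, n-k). -/
open PowerSeries

private lemma factQ (m : ℕ) : ((m+1).factorial : ℚ) = (m+1) * m.factorial := by
  push_cast [Nat.factorial_succ]; ring

private lemma AI (j a : ℕ) :
    ((2*j+1 : ℚ)/(2*j+a+3)) * ((2*j+2*a+4).choose (a+2)) +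
    2 * (((2*j+3 : ℚ)/(2*j+a+4)) * ((2*j+2*a+4).choose (a+1))) +
    ((2*j+5 : ℚ)/(2*j+a+5)) * ((2*j+2*a+4).choose a) =
    ((2*j+3 : ℚ)/(2*j+a+5)) * ((2*j+2*a+6).choose (a+2)) := by
  rw [Nat.cast_choose ℚ (by omega : a+2 ≤ 2*j+2*a+4),
      Nat.cast_choose ℚ (by omega : a+1 ≤ 2*j+2*a+4),
      Nat.cast_choose ℚ (by omega : a ≤ 2*j+2*a+4),
      Nat.cast_choose ℚ (by omega : a+2 ≤ 2*j+2*a+6),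
      show 2*j+2*a+4 - (a+2) = 2*j+a+2 from by omega,
      show 2*j+2*a+4 - (a+1) = 2*j+a+3 from by omega,
      show 2*j+2*a+4 - a = 2*j+a+4 from by omega,
      show 2*j+2*a+6 - (a+2) = 2*j+a+4 from by omega]
  have e1 : ((a+2).factorial : ℚ) = (a+2) * ((a+1) * a.factorial) := by
    rw [show a+2 = a+1+1 from rfl, factQ, factQ]; push_cast; ring
  have e2 : ((a+1).factorial : ℚ) = (a+1) * a.factorial := factQ a
  have e3 : ((2*j+a+3).factorial : ℚ) = (2*j+a+3) * (2*j+a+2).factorial := by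
    rw [show 2*j+a+3 = 2*j+a+2+1 from rfl, factQ]; push_cast; ring
  have e4 : ((2*j+a+4).factorial : ℚ)
      = (2*j+a+4) * ((2*j+a+3) * (2*j+a+2).factorial) := by
    rw [show 2*j+a+4 = 2*j+a+3+1 from rfl, factQ, e3]; push_cast; ring
  have e5 : ((2*j+2*a+6).factorial : ℚ)
      = (2*j+2*a+6) * ((2*j+2*a+5) * (2*j+2*a+4).factorial) := by
    rw [show 2*j+2*a+6 = 2*j+2*a+5+1 from rfl, factQ,
        show 2*j+2*a+5 = 2*j+2*a+4+1 from rfl, factQ]; push_cast; ring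
  rw [e1, e2, e3, e4, e5]
  have h1 : ((a:ℚ)+1) ≠ 0 := by positivity
  have h2 : ((a:ℚ)+2) ≠ 0 := by positivity
  have h3 : (2*(j:ℚ)+a+3) ≠ 0 := by positivity
  have h4 : (2*(j:ℚ)+a+4) ≠ 0 := by positivity
  have h5 : (2*(j:ℚ)+a+5) ≠ 0 := by positivity
  have h6 : (a.factorial : ℚ) ≠ 0 := by
    exact_mod_cast Nat.factorial_ne_zero a
  have h7 : ((2*j+a+2).factorial : ℚ) ≠ 0 := by
    exact_mod_cast Nat.factorial_ne_zero _
  field_simp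
  ring

private lemma AI0 (a : ℕ) :
    ((1 : ℚ)/(a+2)) * ((2*a+2).choose (a+1)) + ((3 : ℚ)/(a+3)) * ((2*a+2).choose a) =
    ((1 : ℚ)/(a+3)) * ((2*a+4).choose (a+2)) := by
  rw [Nat.cast_choose ℚ (by omega : a+1 ≤ 2*a+2),
      Nat.cast_choose ℚ (by omega : a ≤ 2*a+2),
      Nat.cast_choose ℚ (by omega : a+2 ≤ 2*a+4),
      show 2*a+2 - (a+1) = a+1 from by omega,
      show 2*a+2 - a = a+2 from by omega,
      show 2*a+4 - (a+2) = a+2 from by omega]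
  have e1 : ((a+2).factorial : ℚ) = (a+2) * ((a+1) * a.factorial) := by
    rw [show a+2 = a+1+1 from rfl, factQ, factQ]; push_cast; ring
  have e2 : ((a+1).factorial : ℚ) = (a+1) * a.factorial := factQ a
  have e5 : ((2*a+4).factorial : ℚ)
      = (2*a+4) * ((2*a+3) * (2*a+2).factorial) := by
    rw [show 2*a+4 = 2*a+3+1 from rfl, factQ,
        show 2*a+3 = 2*a+2+1 from rfl, factQ]; push_cast; ring
  rw [e1, e2, e5]
  have h1 : ((a:ℚ)+1) ≠ 0 := by positivity
  have h2 : ((a:ℚ)+2) ≠ 0 := by positivity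
  have h3 : ((a:ℚ)+3) ≠ 0 := by positivity
  have h6 : (a.factorial : ℚ) ≠ 0 := by exact_mod_cast Nat.factorial_ne_zero a
  have h7 : ((2*a+2).factorial : ℚ) ≠ 0 := by exact_mod_cast Nat.factorial_ne_zero _
  field_simp
  ring

theorem stmt_13 (c : PowerSeries ℚ) (hc : c = 1 + X * c ^ 2) (n k : ℕ) (hk : k ≤ n) :
    coeff n (c * (X * c ^ 2) ^ k) =
      ((2 * k + 1 : ℚ) / (n + k + 1)) * Nat.choose (2 * n) (n - k) := by
  have hc1 : X * c ^ 2 = c - 1 := by linear_combination -hc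
  have hvan : ∀ m j : ℕ, m < j → coeff m (c * (X * c ^ 2) ^ j) = 0 := by
    intro m j hmj
    have hdvd : (X : PowerSeries ℚ) ^ j ∣ c * (X * c ^ 2) ^ j := ⟨c * (c ^ 2) ^ j, by ring⟩
    exact PowerSeries.X_pow_dvd_iff.mp hdvd m hmj
  have h0 : c * (X * c ^ 2) ^ 0 = 1 + X * (c * (X * c ^ 2) ^ 0 + c * (X * c ^ 2) ^ 1) := by
    rw [hc1]
    linear_combination hc
  have hkey : ∀ j : ℕ, c * (X * c ^ 2) ^ (j + 1) =
      X * (c * (X * c ^ 2) ^ j + (c * (X * c ^ 2) ^ (j + 1) + c * (X * c ^ 2) ^ (j + 1)) + c * (X * c ^ 2) ^ (j + 2)) := by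
    intro j
    rw [hc1]
    linear_combination (-(c * (c - 1) ^ j)) * hc1
  induction n generalizing k with
  | zero =>
    interval_cases k
    simp only [pow_zero, mul_one]
    have hcc : (coeff 0) c = 1 := by rw [hc]; simp
    rw [hcc]; norm_num
  | succ n IH =>
    cases k with
    | zero =>
      have e : (coeff (n+1)) (c * (X * c ^ 2) ^ 0)
          = (coeff n) (c * (X * c ^ 2) ^ 0) + (coeff n) (c * (X * c ^ 2) ^ 1) := by
        conv_lhs => rw [h0]
        rw [map_add, coeff_succ_X_mul, map_add]
        simp
      rcases Nat.eq_zero_or_pos n with rfl | hn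
      · rw [e, IH 0 le_rfl, hvan 0 1 Nat.zero_lt_one]
        norm_num
      · obtain ⟨a, rfl⟩ : ∃ a, n = a + 1 := ⟨n - 1, by omega⟩
        rw [e, IH 0 (Nat.zero_le _), IH 1 hn]
        rw [show a + 1 - 0 = a + 1 from rfl, show a + 1 - 1 = a from rfl,
            show 2 * (a + 1) = 2*a+2 from by ring,
            show a + 1 + 1 - 0 = a + 2 from rfl,
            show 2 * (a + 1 + 1) = 2*a+4 from by ring]
        push_cast
        linear_combination AI0 a
    | succ j =>
      have hj : j ≤ n := by omega
      have e : (coeff (n+1)) (c * (X * c ^ 2) ^ (j+1))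
          = (coeff n) (c * (X * c ^ 2) ^ j) + 2 * (coeff n) (c * (X * c ^ 2) ^ (j+1))
            + (coeff n) (c * (X * c ^ 2) ^ (j+2)) := by
        conv_lhs => rw [hkey j]
        rw [coeff_succ_X_mul, map_add, map_add, map_add]
        ring
      by_cases h2 : j + 2 ≤ n
      · obtain ⟨a, rfl⟩ : ∃ a, n = j + 2 + a := ⟨n - (j+2), by omega⟩
        rw [e, IH j hj, IH (j+1) (by omega), IH (j+2) (by omega)]
        rw [show j+2+a - j = a+2 from by omega,
            show j+2+a - (j+1) = a+1 from by omega,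
            show j+2+a - (j+2) = a from by omega,
            show 2*(j+2+a) = 2*j+2*a+4 from by ring,
            show j+2+a+1 - (j+1) = a+2 from by omega,
            show 2*(j+2+a+1) = 2*j+2*a+6 from by ring]
        push_cast
        linear_combination AI j a
      · by_cases h1 : j + 1 ≤ n
        · have hn : n = j + 1 := by omega
          subst hn
          rw [e, IH j hj, IH (j+1) le_rfl, hvan (j+1) (j+2) (by omega)]
          rw [show j+1 - j = 1 from by omega, Nat.sub_self,
              show 2*(j+1) = 2*j+2 from by ring, Nat.choose_one_right,
              Nat.choose_zero_right,
              show j+1+1 - (j+1) = 1 from by omega,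
              show 2*(j+1+1) = 2*j+4 from by ring, Nat.choose_one_right]
          push_cast
          have d1 : ((j:ℚ)+1+j+1) ≠ 0 := by positivity
          have d2 : ((j:ℚ)+1+(j+1)+1) ≠ 0 := by positivity
          have d3 : ((j:ℚ)+1+1+(j+1)+1) ≠ 0 := by positivity
          field_simp
          ring
        · have hn : j = n := by omega
          subst hn
          rw [e, IH j le_rfl, hvan j (j+1) (by omega), hvan j (j+2) (by omega)]
          rw [Nat.sub_self, show j+1 - (j+1) = 0 from by omega,
              Nat.choose_zero_right, Nat.choose_zero_right]
          push_cast
          have d1 : ((j:ℚ)+j+1) ≠ 0 := by positivity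
          have d2 : ((j:ℚ)+1+(j+1)+1) ≠ 0 := by positivity
          field_simp
          ring
end

section
/- Let q satisfy q = 1 + X*q^4. Then for all n, the coefficient of X^n in q equals (1/(3n+1)) * choose(4n, n) (the quaternary numbers). -/
set_option maxHeartbeats 4000000

open PowerSeries

private lemma ctheta16 (f : PowerSeries ℚ) (k : ℕ) :
    coeff k (X * d⁄dX ℚ f) = k * coeff k f := by
  cases k with
  | zero => simp
  | succ m => rw [coeff_succ_X_mul, coeff_derivative]; push_cast; ring

open Nat in
private lemma choose_step16 (n : ℕ) :
    ((n:ℚ)+1)*(3*n+2)*(3*n+3)*(3*n+4) * ((1/(3*(n+1)+1:ℚ)) * (Nat.choose (4*(n+1)) (n+1)))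
      = ((4*n+1)*(4*n+2)*(4*n+3)*(4*n+4)) * ((1/(3*n+1:ℚ)) * (Nat.choose (4*n) n)) := by
  rw [Nat.cast_choose ℚ (by omega : n+1 ≤ 4*(n+1)), Nat.cast_choose ℚ (by omega : n ≤ 4*n),
    show 4*(n+1)-(n+1) = 3*n+3 by omega, show 4*n-n = 3*n by omega,
    show 4*(n+1) = (4*n+3)+1 by omega]
  have f1 : ((4*n+3)+1)! = ((4*n)+4) * ((4*n+3) * ((4*n+2) * ((4*n+1) * (4*n)!))) := by
    rw [Nat.factorial_succ, show 4*n+3 = (4*n+2)+1 by omega, Nat.factorial_succ,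
      show 4*n+2 = (4*n+1)+1 by omega, Nat.factorial_succ, show 4*n+1 = (4*n)+1 by omega,
      Nat.factorial_succ]
  have f2 : (3*n+3)! = (3*n+3) * ((3*n+2) * ((3*n+1) * (3*n)!)) := by
    rw [show 3*n+3 = (3*n+2)+1 by omega, Nat.factorial_succ, show 3*n+2 = (3*n+1)+1 by omega,
      Nat.factorial_succ, show 3*n+1 = (3*n)+1 by omega, Nat.factorial_succ]
  have f3 : (n+1)! = (n+1) * n ! := Nat.factorial_succ n
  rw [f1, f2, f3]
  have hf : ((4*n)! : ℚ) ≠ 0 := Nat.cast_ne_zero.2 (Nat.factorial_ne_zero _)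
  have hg : ((3*n)! : ℚ) ≠ 0 := Nat.cast_ne_zero.2 (Nat.factorial_ne_zero _)
  have hh : ((n)! : ℚ) ≠ 0 := Nat.cast_ne_zero.2 (Nat.factorial_ne_zero _)
  push_cast
  have p2 : (3*(n:ℚ)+1) ≠ 0 := by positivity
  have p3 : (3*(n:ℚ)+4) ≠ 0 := by positivity
  have p4 : ((n:ℚ)+1) ≠ 0 := by positivity
  have p5 : (3*(n:ℚ)+2) ≠ 0 := by positivity
  have p6 : (3*(n:ℚ)+3) ≠ 0 := by positivity
  field_simp
  ring

private lemma fc_ode16 (q : PowerSeries ℚ) (hq : q = 1 + X * q ^ 4)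
    (d1 d2 d3 d4 : ℚ⟦X⟧)
    (h1 : d1 = q^4 + 4*X*q^3*d1)
    (h2 : d2 = 8*q^3*d1 + 12*X*q^2*d1^2 + 4*X*q^3*d2)
    (h3 : d3 = 36*q^2*d1^2 + 12*q^3*d2 + 24*X*q*d1^3 + 36*X*q^2*d1*d2 + 4*X*q^3*d3)
    (h4 : d4 = 96*q*d1^3 + 144*q^2*d1*d2 + 16*q^3*d3 + 24*X*d1^4 + 144*X*q*d1^2*d2
      + 36*X*q^2*d2^2 + 48*X*q^2*d1*d3 + 4*X*q^3*d4) :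
    C 27 * (X*d1+7*X^2*d2+6*X^3*d3+X^4*d4) - C 3 * (X*d1+X^2*d2)
      = X * (C 256 * (X*d1+7*X^2*d2+6*X^3*d3+X^4*d4) + C 640 * (X*d1+3*X^2*d2+X^3*d3)
        + C 560 * (X*d1+X^2*d2) + C 200 * (X*d1) + C 24 * q) := by
  have hc0 : constantCoeff q = 1 := by rw [hq]; simp
  have hq0 : q ≠ 0 := by intro h; rw [h] at hc0; simp at hc0
  have h43 : (4:ℚ⟦X⟧) - 3*q ≠ 0 := by
    intro h
    have := congrArg (constantCoeff) h
    simp only [map_sub, map_mul, map_ofNat, hc0, mul_one] at this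
    norm_num at this
  simp only [map_ofNat]
  apply HahnSeries.ofPowerSeries_injective (Γ := ℤ) (R := ℚ)
  have Hq := congrArg (HahnSeries.ofPowerSeries ℤ ℚ) hq
  have H1 := congrArg (HahnSeries.ofPowerSeries ℤ ℚ) h1
  have H2 := congrArg (HahnSeries.ofPowerSeries ℤ ℚ) h2
  have H3 := congrArg (HahnSeries.ofPowerSeries ℤ ℚ) h3
  have H4 := congrArg (HahnSeries.ofPowerSeries ℤ ℚ) h4
  simp only [map_add, map_sub, map_mul, map_pow, map_one, map_ofNat] at Hq H1 H2 H3 H4 ⊢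
  set A := HahnSeries.ofPowerSeries ℤ ℚ q with hAdef
  set x := HahnSeries.ofPowerSeries ℤ ℚ (X : ℚ⟦X⟧) with hxdef
  set B1 := HahnSeries.ofPowerSeries ℤ ℚ d1
  set B2 := HahnSeries.ofPowerSeries ℤ ℚ d2
  set B3 := HahnSeries.ofPowerSeries ℤ ℚ d3
  set B4 := HahnSeries.ofPowerSeries ℤ ℚ d4
  have hA0 : A ≠ 0 := by
    rw [hAdef]
    intro h
    exact hq0 (HahnSeries.ofPowerSeries_injective (Γ := ℤ) (R := ℚ) (by rw [map_zero]; exact h))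
  have h43' : (4:LaurentSeries ℚ) - 3*A ≠ 0 := by
    intro h
    apply h43
    apply HahnSeries.ofPowerSeries_injective (Γ := ℤ) (R := ℚ)
    simp only [map_sub, map_mul, map_ofNat, map_zero]
    exact h
  have hu : (1:LaurentSeries ℚ) - 4*x*A^3 ≠ 0 := by
    intro h
    have key : A*(1-4*x*A^3) = 4-3*A := by linear_combination 4*Hq
    rw [h, mul_zero] at key
    exact h43' key.symm
  have hR1 : B1*(4-3*A) = A^5 := by linear_combination A*H1 - 4*B1*Hq
  have hR2 : B2*(4-3*A) = (8*A^3*B1 + 12*x*A^2*B1^2)*A := by linear_combination A*H2 - 4*B2*Hq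
  have hR3 : B3*(4-3*A) = (36*A^2*B1^2 + 12*A^3*B2 + 24*x*A*B1^3 + 36*x*A^2*B1*B2)*A := by
    linear_combination A*H3 - 4*B3*Hq
  have hR4 : B4*(4-3*A) = (96*A*B1^3 + 144*A^2*B1*B2 + 16*A^3*B3 + 24*x*B1^4 + 144*x*A*B1^2*B2
      + 36*x*A^2*B2^2 + 48*x*A^2*B1*B3)*A := by linear_combination A*H4 - 4*B4*Hq
  have key : ((27*(x*B1+7*x^2*B2+6*x^3*B3+x^4*B4) - 3*(x*B1+x^2*B2))
      - x*(256*(x*B1+7*x^2*B2+6*x^3*B3+x^4*B4) + 640*(x*B1+3*x^2*B2+x^3*B3)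
        + 560*(x*B1+x^2*B2) + 200*(x*B1) + 24*A)) * (A^20*(4-3*A)^7) = 0 := by
    linear_combination ((110592*A^20*x^4 - 1048576*A^20*x^5 - 497664*A^21*x^4 + 4718592*A^21*x^5 + 933120*A^22*x^4 - 8847360*A^22*x^5 - 933120*A^23*x^4 + 8847360*A^23*x^5 + 524880*A^24*x^4 - 4976640*A^24*x^5 - 157464*A^25*x^4 + 1492992*A^25*x^5 + 19683*A^26*x^4 - 186624*A^26*x^5))*hR4 + ((663552*A^20*x^3 - 8912896*A^20*x^4 - 2985984*A^21*x^3 + 40108032*A^21*x^4 + 5598720*A^22*x^3 - 75202560*A^22*x^4 - 5598720*A^23*x^3 + 75202560*A^23*x^4 + 1327104*A^23*x^5*B1 - 12582912*A^23*x^6*B1 + 3149280*A^24*x^3 - 41859072*A^24*x^4 - 4194304*A^24*x^5 - 4976640*A^24*x^5*B1 + 47185920*A^24*x^6*B1 - 944784*A^25*x^3 + 11031552*A^25*x^4 + 15728640*A^25*x^5 + 7464960*A^25*x^5*B1 - 70778880*A^25*x^6*B1 + 118098*A^26*x^3 + 902016*A^26*x^4 - 23592960*A^26*x^5 - 5598720*A^26*x^5*B1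 + 53084160*A^26*x^6*B1 - 1866240*A^27*x^4 + 17694720*A^27*x^5 + 2099520*A^27*x^5*B1 - 19906560*A^27*x^6*B1 + 699840*A^28*x^4 - 6635520*A^28*x^5 - 314928*A^28*x^5*B1 + 2985984*A^28*x^6*B1 - 104976*A^29*x^4 + 995328*A^29*x^5))*hR3 + ((761856*A^20*x^2 - 17498112*A^20*x^3 - 3428352*A^21*x^2 + 78741504*A^21*x^3 + 6428160*A^22*x^2 - 147640320*A^22*x^3 + 3981312*A^22*x^5*B1^2 - 37748736*A^22*x^6*B1^2 - 6428160*A^23*x^2 + 147640320*A^23*x^3 + 9953280*A^23*x^4*B1 + 995328*A^23*x^5*B2 - 117964800*A^23*x^5*B1 - 14929920*A^23*x^5*B1^2 - 9437184*A^23*x^6*B2 + 141557760*A^23*x^6*B1^2 + 3615840*A^24*x^2 - 81057024*A^24*x^3 - 26738688*A^24*x^4 - 37324800*A^24*x^4*B1 - 3732480*A^24*x^5*B2 + 442368000*A^24*x^5*B1 + 22394880*A^24*x^5*B1^2 + 35389440*A^24*x^6*B2 - 212336640*A^24*x^6*B1^2 - 1084752*A^25*x^2 + 17449344*A^25*x^3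 + 100270080*A^25*x^4 + 55987200*A^25*x^4*B1 + 5598720*A^25*x^5*B2 - 663552000*A^25*x^5*B1 - 16796160*A^25*x^5*B1^2 - 53084160*A^25*x^6*B2 + 159252480*A^25*x^6*B1^2 + 135594*A^26*x^2 + 8083152*A^26*x^3 - 150405120*A^26*x^4 - 41990400*A^26*x^4*B1 - 4199040*A^26*x^5*B2 + 497664000*A^26*x^5*B1 + 6298560*A^26*x^5*B1^2 + 39813120*A^26*x^6*B2 - 44789760*A^26*x^6*B1^2 - 141557760*A^26*x^7*B1^2 - 8398080*A^27*x^3 + 112803840*A^27*x^4 + 15746400*A^27*x^4*B1 + 1574640*A^27*x^5*B2 - 176670720*A^27*x^5*B1 - 944784*A^27*x^5*B1^2 - 14929920*A^27*x^6*B2 - 94371840*A^27*x^6*B1 - 35831808*A^27*x^6*B1^2 + 424673280*A^27*x^7*B1^2 + 3149280*A^28*x^3 - 40974336*A^28*x^4 - 2361960*A^28*x^4*B1 - 12582912*A^28*x^5 - 236196*A^28*x^5*B2 - 1866240*A^28*x^5*B1 + 2239488*A^28*x^6*B2 + 283115520*A^28*x^6*B1 + 50388480*A^28*x^6*B1^2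 - 477757440*A^28*x^7*B1^2 - 472392*A^29*x^3 + 2363904*A^29*x^4 + 37748736*A^29*x^5 + 33592320*A^29*x^5*B1 - 318504960*A^29*x^6*B1 - 25194240*A^29*x^6*B1^2 + 238878720*A^29*x^7*B1^2 + 4478976*A^30*x^4 - 42467328*A^30*x^5 - 16796160*A^30*x^5*B1 + 159252480*A^30*x^6*B1 + 4723920*A^30*x^6*B1^2 - 44789760*A^30*x^7*B1^2 - 2239488*A^31*x^4 + 21233664*A^31*x^5 + 3149280*A^31*x^5*B1 - 29859840*A^31*x^6*B1 + 419904*A^32*x^4 - 3981312*A^32*x^5))*hR2 + ((98304*A^20*x - 6782976*A^20*x^2 - 442368*A^21*x + 30523392*A^21*x^2 + 663552*A^21*x^5*B1^3 - 6291456*A^21*x^6*B1^3 + 829440*A^22*x - 57231360*A^22*x^2 + 6635520*A^22*x^4*B1^2 - 78643200*A^22*x^5*B1^2 - 2488320*A^22*x^5*B1^3 + 23592960*A^22*x^6*B1^3 - 829440*A^23*x + 57231360*A^23*x^2 + 8257536*A^23*x^3*B1 - 132710400*A^23*x^4*B1 - 24883200*A^23*x^4*B1^2 + 294912000*A^23*x^5*B1^2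 + 3732480*A^23*x^5*B1^3 - 35389440*A^23*x^6*B1^3 + 466560*A^24*x - 30668928*A^24*x^2 - 34996224*A^24*x^3 - 30965760*A^24*x^3*B1 + 497664000*A^24*x^4*B1 + 37324800*A^24*x^4*B1^2 - 442368000*A^24*x^5*B1^2 - 2799360*A^24*x^5*B1^3 + 26542080*A^24*x^6*B1^3 - 139968*A^25*x + 3943872*A^25*x^2 + 131235840*A^25*x^3 + 46448640*A^25*x^3*B1 - 746496000*A^25*x^4*B1 - 27993600*A^25*x^4*B1^2 + 331776000*A^25*x^5*B1^2 + 1049760*A^25*x^5*B1^3 + 9953280*A^25*x^6*B1^3 - 188743680*A^25*x^7*B1^3 + 17496*A^26*x + 7363656*A^26*x^2 - 196853760*A^26*x^3 - 34836480*A^26*x^3*B1 + 559872000*A^26*x^4*B1 + 10497600*A^26*x^4*B1^2 - 71829504*A^26*x^5*B1^2 - 157464*A^26*x^5*B1^3 - 569376768*A^26*x^6*B1^2 - 58226688*A^26*x^6*B1^3 + 566231040*A^26*x^7*B1^3 - 6428160*A^27*x^2 + 147640320*A^27*x^3 + 13063680*A^27*x^3*B1 - 178433280*A^27*x^4*B1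 - 1574640*A^27*x^4*B1^2 - 373555200*A^27*x^5*B1 - 139097088*A^27*x^5*B1^2 + 1708130304*A^27*x^6*B1^2 + 67184640*A^27*x^6*B1^3 - 637009920*A^27*x^7*B1^3 + 2410560*A^28*x^2 - 49319424*A^28*x^3 - 1959552*A^28*x^3*B1 - 86654976*A^28*x^4 - 63063360*A^28*x^4*B1 + 1120665600*A^28*x^5*B1 + 177479424*A^28*x^5*B1^2 - 1921646592*A^28*x^6*B1^2 - 33592320*A^28*x^6*B1^3 + 318504960*A^28*x^7*B1^3 - 361584*A^29*x^2 - 9832320*A^29*x^3 + 259964928*A^29*x^4 + 106375680*A^29*x^4*B1 - 1260748800*A^29*x^5*B1 - 88739712*A^29*x^5*B1^2 + 960823296*A^29*x^6*B1^2 + 6298560*A^29*x^6*B1^3 - 14929920*A^29*x^7*B1^3 - 424673280*A^29*x^8*B1^3 + 20404224*A^30*x^3 - 292460544*A^30*x^4 - 53187840*A^30*x^4*B1 + 630374400*A^30*x^5*B1 + 16638696*A^30*x^5*B1^2 - 115458048*A^30*x^6*B1^2 - 613416960*A^30*x^7*B1^2 - 100776960*A^30*x^7*B1^3 + 955514880*A^30*x^8*B1^3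 - 10202112*A^31*x^3 + 146230272*A^31*x^4 + 9972720*A^31*x^4*B1 - 81160704*A^31*x^5*B1 - 368836608*A^31*x^6*B1 - 145566720*A^31*x^6*B1^2 + 1380188160*A^31*x^7*B1^2 + 75582720*A^31*x^7*B1^3 - 716636160*A^31*x^8*B1^3 + 1912896*A^32*x^3 - 16884288*A^32*x^4 - 118554624*A^32*x^5 - 83327616*A^32*x^5*B1 + 829882368*A^32*x^6*B1 + 109175040*A^32*x^6*B1^2 - 1035141120*A^32*x^7*B1^2 - 18895680*A^32*x^7*B1^3 + 179159040*A^32*x^8*B1^3 - 23701248*A^33*x^4 + 266747904*A^33*x^5 + 62495712*A^33*x^5*B1 - 622411776*A^33*x^6*B1 - 27293760*A^33*x^6*B1^2 + 258785280*A^33*x^7*B1^2 + 17775936*A^34*x^4 - 200060928*A^34*x^5 - 15623928*A^34*x^5*B1 + 155602944*A^34*x^6*B1 + 11197440*A^34*x^7*B1^2 - 106168320*A^34*x^8*B1^2 - 4443984*A^35*x^4 + 50015232*A^35*x^5 + 16174080*A^35*x^6*B1 - 153354240*A^35*x^7*B1 - 16796160*A^35*x^7*B1^2 + 159252480*A^35*x^8*B1^2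 + 9258624*A^36*x^5 - 92209152*A^36*x^6 - 24261120*A^36*x^6*B1 + 230031360*A^36*x^7*B1 + 6298560*A^36*x^7*B1^2 - 59719680*A^36*x^8*B1^2 - 13887936*A^37*x^5 + 138313728*A^37*x^6 + 9097920*A^37*x^6*B1 - 86261760*A^37*x^7*B1 + 5207976*A^38*x^5 - 51867648*A^38*x^6 + 2799360*A^39*x^7*B1 - 26542080*A^39*x^8*B1 + 4043520*A^40*x^6 - 38338560*A^40*x^7 - 2099520*A^40*x^7*B1 + 19906560*A^40*x^8*B1 - 3032640*A^41*x^6 + 28753920*A^41*x^7 + 699840*A^44*x^7 - 6635520*A^44*x^8))*hR1 + ((393216*A^21*x - 1671168*A^22*x + 2973696*A^23*x - 2832384*A^24*x + 1423872*A^25*x + 6389760*A^25*x^2 - 93312*A^26*x - 22462464*A^26*x^2 - 432864*A^27*x + 31795200*A^27*x^2 + 344088*A^28*x - 22603776*A^28*x^2 - 122472*A^29*x + 6641280*A^29*x^2 + 28606464*A^29*x^3 + 17496*A^30*x + 2790720*A^30*x^2 - 80166912*A^30*x^3 - 4140072*A^31*x^2 + 84891648*A^31*x^3 + 1944000*A^32*x^2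 - 40144896*A^32*x^3 - 344088*A^33*x^2 + 2533248*A^33*x^3 + 58048512*A^33*x^4 + 9574848*A^34*x^3 - 121749504*A^34*x^4 - 6689304*A^35*x^3 + 85819392*A^35*x^4 + 1568808*A^36*x^3 - 20265984*A^36*x^4 - 5914944*A^37*x^4 + 60506112*A^37*x^5 + 8211456*A^38*x^4 - 84492288*A^38*x^5 - 2875176*A^39*x^4 + 29749248*A^39*x^5 - 3343680*A^41*x^5 + 31703040*A^41*x^6 + 2332800*A^42*x^5 - 22118400*A^42*x^6 - 699840*A^45*x^6 + 6635520*A^45*x^7))*Hq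
  have hz : (A^20*(4-3*A)^7) ≠ 0 := mul_ne_zero (pow_ne_zero _ hA0) (pow_ne_zero _ h43')
  have hfin := (mul_eq_zero.mp key).resolve_right hz
  linear_combination hfin

private lemma rec_aux16 (q : PowerSeries ℚ) (hq : q = 1 + X * q ^ 4) (n : ℕ) :
    ((n:ℚ)+1)*(3*n+2)*(3*n+3)*(3*n+4) * coeff (n+1) q
      = (4*n+1)*(4*n+2)*(4*n+3)*(4*n+4) * coeff n q := by
  have d4' : d⁄dX ℚ (4:ℚ⟦X⟧) = 0 := by
    rw [show (4:ℚ⟦X⟧) = ((4:ℕ):ℚ⟦X⟧) by norm_num]; exact Derivation.map_natCast _ _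
  have d3' : d⁄dX ℚ (3:ℚ⟦X⟧) = 0 := by
    rw [show (3:ℚ⟦X⟧) = ((3:ℕ):ℚ⟦X⟧) by norm_num]; exact Derivation.map_natCast _ _
  have d8' : d⁄dX ℚ (8:ℚ⟦X⟧) = 0 := by
    rw [show (8:ℚ⟦X⟧) = ((8:ℕ):ℚ⟦X⟧) by norm_num]; exact Derivation.map_natCast _ _
  have d12' : d⁄dX ℚ (12:ℚ⟦X⟧) = 0 := by
    rw [show (12:ℚ⟦X⟧) = ((12:ℕ):ℚ⟦X⟧) by norm_num]; exact Derivation.map_natCast _ _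
  have d24' : d⁄dX ℚ (24:ℚ⟦X⟧) = 0 := by
    rw [show (24:ℚ⟦X⟧) = ((24:ℕ):ℚ⟦X⟧) by norm_num]; exact Derivation.map_natCast _ _
  have d36' : d⁄dX ℚ (36:ℚ⟦X⟧) = 0 := by
    rw [show (36:ℚ⟦X⟧) = ((36:ℕ):ℚ⟦X⟧) by norm_num]; exact Derivation.map_natCast _ _
  set d1 := d⁄dX ℚ q with hd1
  set d2 := d⁄dX ℚ d1 with hd2
  set d3 := d⁄dX ℚ d2 with hd3
  set d4 := d⁄dX ℚ d3 with hd4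
  have h1 : d1 = q^4 + 4*X*q^3*d1 := by
    rw [hd1]; nth_rewrite 1 [hq]
    simp only [map_add, Derivation.leibniz, Derivation.leibniz_pow, derivative_X,
      Derivation.map_one_eq_zero, smul_eq_mul, nsmul_eq_mul, Nat.cast_ofNat, mul_one, d4']
    ring
  have h2 : d2 = 8*q^3*d1 + 12*X*q^2*d1^2 + 4*X*q^3*d2 := by
    rw [hd2]; nth_rewrite 1 [h1]
    simp only [map_add, Derivation.leibniz, Derivation.leibniz_pow, derivative_X,
      Derivation.map_one_eq_zero, smul_eq_mul, nsmul_eq_mul, Nat.cast_ofNat, mul_one, d4',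
      ← hd1, ← hd2]
    ring
  have h3 : d3 = 36*q^2*d1^2 + 12*q^3*d2 + 24*X*q*d1^3 + 36*X*q^2*d1*d2 + 4*X*q^3*d3 := by
    rw [hd3]; nth_rewrite 1 [h2]
    simp only [map_add, Derivation.leibniz, Derivation.leibniz_pow, derivative_X,
      Derivation.map_one_eq_zero, smul_eq_mul, nsmul_eq_mul, Nat.cast_ofNat, mul_one,
      d4', d8', d12', ← hd1, ← hd2, ← hd3]
    ring
  have h4 : d4 = 96*q*d1^3 + 144*q^2*d1*d2 + 16*q^3*d3 + 24*X*d1^4 + 144*X*q*d1^2*d2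
      + 36*X*q^2*d2^2 + 48*X*q^2*d1*d3 + 4*X*q^3*d4 := by
    rw [hd4]; nth_rewrite 1 [h3]
    simp only [map_add, Derivation.leibniz, Derivation.leibniz_pow, derivative_X,
      Derivation.map_one_eq_zero, smul_eq_mul, nsmul_eq_mul, Nat.cast_ofNat, mul_one,
      d4', d12', d24', d36', ← hd1, ← hd2, ← hd3, ← hd4]
    ring
  have hODE := fc_ode16 q hq d1 d2 d3 d4 h1 h2 h3 h4
  have E2 : X * (d⁄dX ℚ (X*d1)) = X*d1 + X^2*d2 := by
    simp only [Derivation.leibniz, derivative_X, smul_eq_mul, mul_one, ← hd2]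
    ring
  have E3 : X * (d⁄dX ℚ (X * (d⁄dX ℚ (X*d1)))) = X*d1 + 3*X^2*d2 + X^3*d3 := by
    rw [E2]
    simp only [map_add, Derivation.leibniz, Derivation.leibniz_pow, derivative_X,
      smul_eq_mul, nsmul_eq_mul, Nat.cast_ofNat, mul_one, ← hd2, ← hd3]
    ring
  have E4 : X * (d⁄dX ℚ (X * (d⁄dX ℚ (X * (d⁄dX ℚ (X*d1))))))
      = X*d1 + 7*X^2*d2 + 6*X^3*d3 + X^4*d4 := by
    rw [E3]
    simp only [map_add, Derivation.leibniz, Derivation.leibniz_pow, derivative_X,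
      smul_eq_mul, nsmul_eq_mul, Nat.cast_ofNat, mul_one, ← hd2, ← hd3, ← hd4, d3']
    ring
  rw [← E4, ← E3, ← E2] at hODE
  have E := congrArg (coeff (n+1)) hODE
  rw [coeff_succ_X_mul] at E
  simp only [map_sub, map_add, coeff_C_mul, ctheta16, hd1] at E
  push_cast at E ⊢
  linear_combination E

theorem stmt_16 (q : PowerSeries ℚ) (hq : q = 1 + X * q ^ 4) (n : ℕ) :
    coeff n q = (1 / (3 * n + 1 : ℚ)) * Nat.choose (4 * n) n := by
  induction n with
  | zero =>
      have hc0 : constantCoeff q = 1 := by rw [hq]; simp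
      rw [coeff_zero_eq_constantCoeff, hc0]
      norm_num
  | succ n ih =>
      have R := rec_aux16 q hq n
      rw [ih] at R
      have hK : ((n:ℚ)+1)*(3*n+2)*(3*n+3)*(3*n+4) ≠ 0 := by positivity
      apply mul_left_cancel₀ hK
      rw [R]
      have CS := choose_step16 n
      push_cast at CS ⊢
      linear_combination -CS
end

section
/- Let g_r satisfy g_r = 1 + X*g_r^r (r ≥ 2), and let f̄ denote the compositional inverse of X*g_r(X). Then X * f̄^{r-2} = f̄^{r-1} + X^r as formal power series. -/
open PowerSeries

namespace CompAux

variable {g0 : PowerSeries ℚ} (hc : constantCoeff g0 = 0)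

lemma coeff_pow_eq_zero (hc : constantCoeff g0 = 0) {n k : ℕ} (h : n < k) :
    coeff n (g0 ^ k) = 0 := by
  have hd : (X : PowerSeries ℚ) ^ k ∣ g0 ^ k :=
    pow_dvd_pow_of_dvd (X_dvd_iff.mpr hc) k
  exact (X_pow_dvd_iff.mp hd) n h

lemma coeff_aeval_eq_zero (hc : constantCoeff g0 = 0) (n : ℕ) (p : Polynomial ℚ)
    (hp : ∀ k ≤ n, p.coeff k = 0) :
    coeff n (Polynomial.aeval g0 p) = 0 := by
  rw [Polynomial.aeval_eq_sum_range' (lt_add_one p.natDegree)]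
  rw [map_sum]
  apply Finset.sum_eq_zero
  intro k _
  rcases le_or_gt k n with hk | hk
  · simp [hp k hk]
  · simp [coeff_pow_eq_zero hc hk]

lemma coeff_comp (hc : constantCoeff g0 = 0) (f : PowerSeries ℚ) (n : ℕ)
    (q : Polynomial ℚ) (hq : ∀ k ≤ n, q.coeff k = coeff k f) :
    coeff n (comp f g0) = coeff n (Polynomial.aeval g0 q) := by
  have h0 : coeff n (comp f g0)
      = coeff n (Polynomial.aeval g0 (trunc (n + 1) f)) := by
    rw [comp, coeff_mk, Polynomial.aeval_eq_sum_range' (natDegree_trunc_lt f n)]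
    congr 1
    apply Finset.sum_congr rfl
    intro k hk
    rw [coeff_trunc, if_pos (Finset.mem_range.mp hk)]
  rw [h0]
  have hdiff : coeff n (Polynomial.aeval g0 (q - trunc (n + 1) f)) = 0 := by
    apply coeff_aeval_eq_zero hc
    intro k hk
    rw [Polynomial.coeff_sub, coeff_trunc, if_pos (Nat.lt_succ_of_le hk), hq k hk,
      sub_self]
  rw [map_sub, map_sub] at hdiff
  linarith [hdiff]

lemma comp_one (hc : constantCoeff g0 = 0) : comp 1 g0 = 1 := by
  ext n
  rw [coeff_comp hc 1 n 1 (by intro k _; simp [Polynomial.coeff_one, PowerSeries.coeff_one])]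
  simp

lemma comp_X (hc : constantCoeff g0 = 0) : comp X g0 = g0 := by
  ext n
  rw [coeff_comp hc X n Polynomial.X
    (by intro k _; simp [Polynomial.coeff_X, PowerSeries.coeff_X, eq_comm])]
  simp

lemma comp_add (hc : constantCoeff g0 = 0) (f1 f2 : PowerSeries ℚ) :
    comp (f1 + f2) g0 = comp f1 g0 + comp f2 g0 := by
  ext n
  rw [map_add,
    coeff_comp hc (f1 + f2) n (trunc (n+1) f1 + trunc (n+1) f2)
      (by intro k hk; simp [coeff_trunc, Nat.lt_succ_of_le hk]),
    coeff_comp hc f1 n (trunc (n+1) f1) (by intro k hk; simp [coeff_trunc, Nat.lt_succ_of_le hk]),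
    coeff_comp hc f2 n (trunc (n+1) f2) (by intro k hk; simp [coeff_trunc, Nat.lt_succ_of_le hk]),
    map_add, map_add]

lemma comp_mul (hc : constantCoeff g0 = 0) (f1 f2 : PowerSeries ℚ) :
    comp (f1 * f2) g0 = comp f1 g0 * comp f2 g0 := by
  ext n
  have hq : ∀ k ≤ n, (trunc (n+1) f1 * trunc (n+1) f2).coeff k = coeff k (f1 * f2) := by
    intro k hk
    have h1 : (coeff k) (((trunc (n+1) f1 : Polynomial ℚ) : PowerSeries ℚ)
        * ((trunc (n+1) f2 : Polynomial ℚ) : PowerSeries ℚ)) = coeff k (f1 * f2) := by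
      have h2 := congrArg (fun p => Polynomial.coeff p k)
        (trunc_trunc_mul_trunc (n := n+1) f1 f2)
      simp only [coeff_trunc, if_pos (Nat.lt_succ_of_le hk)] at h2
      exact h2
    rw [← Polynomial.coeff_coe, Polynomial.coe_mul]
    exact h1
  rw [coeff_comp hc (f1 * f2) n _ hq, map_mul, coeff_mul, coeff_mul]
  apply Finset.sum_congr rfl
  intro p hp
  have hp1 : p.1 ≤ n := Finset.HasAntidiagonal.antidiagonal.fst_le hp
  have hp2 : p.2 ≤ n := Finset.HasAntidiagonal.antidiagonal.snd_le hp
  rw [coeff_comp hc f1 p.1 (trunc (n+1) f1)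
      (by intro k hk; simp [coeff_trunc, Nat.lt_succ_of_le (hk.trans hp1)]),
    coeff_comp hc f2 p.2 (trunc (n+1) f2)
      (by intro k hk; simp [coeff_trunc, Nat.lt_succ_of_le (hk.trans hp2)])]

lemma comp_pow (hc : constantCoeff g0 = 0) (f : PowerSeries ℚ) (k : ℕ) :
    comp (f ^ k) g0 = comp f g0 ^ k := by
  induction k with
  | zero => simpa using comp_one hc
  | succ k ih => rw [pow_succ, comp_mul hc, ih, pow_succ]

end CompAux

theorem stmt_18 (r : ℕ) (hr : 2 ≤ r) (g fbar : PowerSeries ℚ)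
    (hg : g = 1 + X * g ^ r)
    (hfbar0 : constantCoeff fbar = 0)
    (hfbar : comp (X * g) fbar = X) :
    X * fbar ^ (r - 2) = fbar ^ (r - 1) + X ^ r := by
  set h := comp g fbar with hh
  have hXh : fbar * h = X := by
    rw [← hfbar, CompAux.comp_mul hfbar0, CompAux.comp_X hfbar0, ← hh]
  have hheq : h = 1 + fbar * h ^ r := by
    conv_lhs => rw [hh, hg]
    rw [CompAux.comp_add hfbar0, CompAux.comp_one hfbar0, CompAux.comp_mul hfbar0,
      CompAux.comp_X hfbar0, CompAux.comp_pow hfbar0, ← hh]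
  obtain ⟨s, rfl⟩ : ∃ s, r = s + 2 := ⟨r - 2, by omega⟩
  have key : fbar ^ (s + 1) * h = fbar ^ (s + 1) + X ^ (s + 2) := by
    calc fbar ^ (s + 1) * h = fbar ^ (s + 1) * (1 + fbar * h ^ (s + 2)) := by rw [← hheq]
    _ = fbar ^ (s + 1) + (fbar * h) ^ (s + 2) := by ring
    _ = fbar ^ (s + 1) + X ^ (s + 2) := by rw [hXh]
  have : X * fbar ^ s = fbar ^ (s + 1) * h := by
    rw [← hXh]; ring
  simp only [show s + 2 - 2 = s from rfl, show s + 2 - 1 = s + 1 from rfl]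
  rw [this, key]
end
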